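/- arXiv:2410.13665 — 9 statements merged into one kernel-verified Lean document; each statement's English description precedes it below -/
import Mathlib

section
/- Let H be a finite set of integral vectors in ℤ^n such that every integral vector in the cone generated by H can be written as a nonnegative integral combination of vectors in H (i.e., H is an integral generating set for its cone), and suppose the cone generated by H is pointed (contains no line). Then H contains a linearly independent subset B such that every integral vector in the linear span of H is an integral linear combination of vectors in B. -/
open scoped Classical

noncomputable section

/-- The cone generated by a finite set of integral vectors, viewed in `ℝ^n`. -/
def intCone {n : ℕ} (H : Finset (Fin n → ℤ)) : Set (Fin n → ℝ) :=
  {x | ∃ c : (Fin n → ℤ) → ℝ, (∀ h, 0 ≤ c h) ∧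
    x = ∑ h ∈ H, c h • (fun i => (h i : ℝ))}

/-!
Induction on the dimension of `lin H`. Since `cone H` is pointed, a minimal generating subset
yields a generator `e ∈ H` spanning an extreme ray; dividing `e` by the gcd of its entries gives
a primitive `p` with `a ⬝ᵥ p = 1` for some integral `a`, and `p ∈ H` because the integral
representation of `p` can only use generators on the ray. The projection
`x ↦ x - (a ⬝ᵥ x) • p` maps `H` onto an integral generating set of a pointed cone of one
dimension less; lifting the subset given by induction and adding `p` yields at most `dim (lin H)`
vectors of `H` generating `lin H ∩ ℤⁿ`, which are therefore linearly independent.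
-/

open Module Submodule

namespace PointedCone

section Ring

variable {R E F : Type*} [Ring R] [LinearOrder R] [IsOrderedRing R]
  [AddCommGroup E] [Module R E] [AddCommGroup F] [Module R F]

theorem lineal_map_eq_bot {C : PointedCone R E} {f : E →ₗ[R] F}
    (hf : (C ⊓ ↑(LinearMap.ker f)).IsFaceOf C) : (C.map f).lineal = ⊥ := by
  refine (Submodule.eq_bot_iff _).2 fun v ⟨hv, hnv⟩ => ?_
  obtain ⟨y, hy, rfl⟩ := mem_map.1 hv
  obtain ⟨z, hz, hzy⟩ := mem_map.1 hnv
  have hyz : y + z ∈ C ⊓ ↑(LinearMap.ker f) :=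
    ⟨add_mem hy hz, by simp [hzy]⟩
  exact (hf.mem_of_add_mem_left hy hz hyz).2

end Ring

section Field

variable {𝕜 E : Type*} [Field 𝕜] [LinearOrder 𝕜] [IsStrictOrderedRing 𝕜]
  [AddCommGroup E] [Module 𝕜 E]

theorem isFaceOf_inf_span_singleton {s : Set E} {e : E} (he : e ∈ s)
    (hne : e ∉ hull 𝕜 (s \ {e})) (hlin : (hull 𝕜 s).lineal = ⊥) :
    (hull 𝕜 s ⊓ ↑(𝕜 ∙ e)).IsFaceOf (hull 𝕜 s) := by
  have hs : hull 𝕜 s = hull 𝕜 (insert e (s \ {e})) := by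
    rw [Set.insert_sdiff_singleton, Set.insert_eq_of_mem he]
  have heC : e ∈ hull 𝕜 s := subset_hull he
  have hsub : hull 𝕜 (s \ {e}) ≤ hull 𝕜 s := span_mono Set.sdiff_subset
  refine IsFaceOf.of_mem_of_add_mem_left inf_le_left fun {y z} hy hz hyz => ⟨hy, ?_⟩
  rw [hs] at hy hz
  obtain ⟨a, y', hy', rfl⟩ := mem_span_insert.1 hy
  obtain ⟨b, z', hz', rfl⟩ := mem_span_insert.1 hz
  obtain ⟨c, hc⟩ := mem_span_singleton.1 hyz.2
  have hw : y' + z' = (c - a - b) • e := by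
    rw [sub_sub, sub_smul, hc, ← Nonneg.coe_smul, ← Nonneg.coe_smul, add_smul]
    abel
  -- a positive multiple would make `e` redundant, a nonpositive one contradicts pointedness
  by_cases hpos : 0 < (c - a - b : 𝕜)
  · have he' : (c - a - b)⁻¹ • (y' + z') = e := by rw [hw, inv_smul_smul₀ hpos.ne']
    have := smul_mem _ (inv_nonneg.2 hpos.le) (add_mem hy' hz')
    rw [he'] at this
    exact absurd this hne
  have hw0 : y' + z' = 0 := by
    have : y' + z' ∈ (hull 𝕜 s).lineal := mem_lineal.2
      ⟨add_mem (hsub hy') (hsub hz'),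
        by rw [hw, ← neg_smul]; exact smul_mem _ (by linarith) heC⟩
    rwa [hlin, mem_bot] at this
  have hy'0 : y' = 0 := by
    have : y' ∈ (hull 𝕜 s).lineal := mem_lineal.2
      ⟨hsub hy', by rw [neg_eq_of_add_eq_zero_right hw0]; exact hsub hz'⟩
    rwa [hlin, mem_bot] at this
  rw [hy'0, add_zero, ← Nonneg.coe_smul]
  exact (𝕜 ∙ e).smul_mem _ (mem_span_singleton_self e)

theorem exists_isFaceOf_inf_span_singleton {T : Finset E}
    (hlin : (hull 𝕜 (T : Set E)).lineal = ⊥) (hT : hull 𝕜 (T : Set E) ≠ ⊥) :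
    ∃ e ∈ T, e ≠ 0 ∧ (hull 𝕜 (T : Set E) ⊓ ↑(𝕜 ∙ e)).IsFaceOf (hull 𝕜 ↑T) := by
  obtain ⟨S, hST, hmin⟩ := exists_minimal_le_of_wellFoundedLT
    (fun S : Finset E => hull 𝕜 (S : Set E) = hull 𝕜 ↑T) T rfl
  have hS : hull 𝕜 (S : Set E) = hull 𝕜 ↑T := hmin.prop
  obtain ⟨e, heS⟩ : S.Nonempty := by
    rw [Finset.nonempty_iff_ne_empty]
    rintro rfl
    exact hT (by rw [← hS]; simp)
  have hne : e ∉ hull 𝕜 ((S : Set E) \ {e}) := by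
    intro he
    have hS' : hull 𝕜 ((S.erase e : Finset E) : Set E) = hull 𝕜 ↑T := by
      rw [Finset.coe_erase, ← hS]
      conv_rhs =>
        rw [← Set.insert_eq_of_mem (Finset.mem_coe.2 heS), ← Set.insert_sdiff_singleton]
      exact (span_insert_eq_span he).symm
    exact Finset.notMem_erase e S (hmin.2 hS' (Finset.erase_subset e S) heS)
  refine ⟨e, hST heS, ?_, hS ▸ isFaceOf_inf_span_singleton heS hne (hS ▸ hlin)⟩
  rintro rfl
  exact hne (zero_mem _)

end Field

end PointedCone

theorem Submodule.finrank_map_lt {K V V₂ : Type*} [DivisionRing K]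
    [AddCommGroup V] [Module K V] [AddCommGroup V₂] [Module K V₂]
    {U : Submodule K V} [FiniteDimensional K U] {f : V →ₗ[K] V₂} {v : V}
    (hv : v ∈ U) (hv0 : v ≠ 0) (hfv : f v = 0) :
    finrank K (U.map f) < finrank K U := by
  have h := LinearMap.finrank_range_add_finrank_ker (f.domRestrict U)
  rw [LinearMap.range_domRestrict] at h
  have hker : 0 < finrank K (LinearMap.ker (f.domRestrict U)) :=
    Module.finrank_pos_iff_exists_ne_zero.2 ⟨⟨⟨v, hv⟩, by simp [hfv]⟩, by simp [hv0]⟩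
  omega

namespace LinearMap

variable {R M : Type*} [CommRing R] [AddCommGroup M] [Module R M]

def projAlong (f : M →ₗ[R] R) (p : M) : M →ₗ[R] M := LinearMap.id - f.smulRight p

variable {f : M →ₗ[R] R} {p : M}

@[simp] theorem projAlong_apply (x : M) : projAlong f p x = x - f x • p := rfl

theorem projAlong_self (hp : f p = 1) : projAlong f p p = 0 := by simp [hp]

theorem projAlong_projAlong (hp : f p = 1) (x : M) :
    projAlong f p (projAlong f p x) = projAlong f p x := by
  simp [hp]

theorem ker_projAlong (hp : f p = 1) : ker (projAlong f p) = R ∙ p := by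
  ext x
  rw [mem_ker, projAlong_apply, sub_eq_zero, mem_span_singleton]
  exact ⟨fun h => ⟨f x, h.symm⟩, by rintro ⟨t, rfl⟩; simp [hp]⟩

theorem mem_span_insert_of_projAlong_mem (hp : f p = 1) {s : Set M} {x : M}
    (hx : projAlong f p x ∈ span R (projAlong f p '' s)) : x ∈ span R (insert p s) := by
  rw [span_image] at hx
  obtain ⟨y, hy, hxy⟩ := mem_map.1 hx
  obtain ⟨t, ht⟩ := mem_span_singleton.1 <| show x - y ∈ R ∙ p by
    rw [← ker_projAlong hp, mem_ker, map_sub, hxy, sub_self]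
  exact mem_span_insert.2 ⟨t, y, hy, by rw [ht]; abel⟩

end LinearMap

namespace IntegralGeneratingSet

variable {n : ℕ}

def castVec : (Fin n → ℤ) →ₗ[ℤ] (Fin n → ℝ) :=
  (Algebra.linearMap ℤ ℝ).compLeft (Fin n)

theorem castVec_injective : Function.Injective (castVec (n := n)) :=
  fun x y h => funext fun i => by simpa [castVec] using congrFun h i

theorem castVec_eq_zero {x : Fin n → ℤ} : castVec x = 0 ↔ x = 0 :=
  map_eq_zero_iff _ castVec_injective

theorem castVec_zsmul (k : ℤ) (x : Fin n → ℤ) :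
    castVec (k • x) = (k : ℝ) • castVec x := by
  rw [map_zsmul, Int.cast_smul_eq_zsmul]

theorem castVec_nsmul (k : ℕ) (x : Fin n → ℤ) :
    castVec (k • x) = (k : ℝ) • castVec x := by
  rw [map_nsmul, Nat.cast_smul_eq_nsmul]

theorem castVec_dotProduct (a x : Fin n → ℤ) :
    castVec a ⬝ᵥ castVec x = ((a ⬝ᵥ x : ℤ) : ℝ) :=
  ((Int.castRingHom ℝ).map_dotProduct a x).symm

theorem castVec_dotProduct_eq_one {a p : Fin n → ℤ} (ha : a ⬝ᵥ p = 1) :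
    castVec a ⬝ᵥ castVec p = 1 := by
  rw [castVec_dotProduct, ha, Int.cast_one]

abbrev cone (H : Finset (Fin n → ℤ)) : PointedCone ℝ (Fin n → ℝ) :=
  PointedCone.hull ℝ (castVec '' ↑H)

abbrev realSpan (H : Finset (Fin n → ℤ)) : Submodule ℝ (Fin n → ℝ) :=
  span ℝ (castVec '' ↑H)

theorem mem_intCone_iff {H : Finset (Fin n → ℤ)} {v : Fin n → ℝ} :
    v ∈ intCone H ↔ v ∈ cone H := by
  rw [cone, PointedCone.hull, mem_span_image_finset_iff_exists_fun']
  constructor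
  · rintro ⟨c, hc, rfl⟩
    exact ⟨fun h => ⟨c h, hc h⟩, rfl⟩
  · rintro ⟨c, rfl⟩
    exact ⟨fun h => c h, fun h => (c h).2, rfl⟩

def IsIntGenerating (H : Finset (Fin n → ℤ)) : Prop :=
  ∀ x, castVec x ∈ cone H → x ∈ span ℕ (H : Set (Fin n → ℤ))

theorem exists_eq_nsmul_dotProduct_eq_one {e : Fin n → ℤ} (he : e ≠ 0) :
    ∃ g : ℕ, 0 < g ∧ ∃ p a : Fin n → ℤ, e = g • p ∧ a ⬝ᵥ p = 1 := by
  obtain ⟨g₀, hg₀⟩ := (IsPrincipalIdealRing.principal (Ideal.span (Set.range e))).principal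
  set g := g₀.natAbs
  have hI : Ideal.span (Set.range e) = Ideal.span {(g : ℤ)} := by
    rw [Int.span_natAbs]
    exact hg₀
  have hdvd : ∀ j, (g : ℤ) ∣ e j := fun j =>
    Ideal.mem_span_singleton.1 (hI ▸ Ideal.subset_span ⟨j, rfl⟩)
  choose q hq using hdvd
  have hg : g ≠ 0 := by
    rintro hg
    exact he (funext fun j => by simp [hq j, hg])
  obtain ⟨c, hc⟩ := Ideal.mem_span_range_iff_exists_fun.1
    (hI ▸ Ideal.mem_span_singleton_self (g : ℤ))
  refine ⟨g, Nat.pos_of_ne_zero hg, q, c, funext fun j => by simp [hq j], ?_⟩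
  refine mul_left_cancel₀ (Int.natCast_ne_zero.2 hg) ?_
  calc (g : ℤ) * (c ⬝ᵥ q) = ∑ j, c j * e j := by
        rw [dotProduct, Finset.mul_sum]
        exact Finset.sum_congr rfl fun j _ => by rw [hq j]; ring
    _ = g * 1 := by rw [hc, mul_one]

section Projection

variable (a p : Fin n → ℤ)

def intProj : (Fin n → ℤ) →ₗ[ℤ] (Fin n → ℤ) := (dotProductBilin ℤ ℤ a).projAlong p

def realProj : (Fin n → ℝ) →ₗ[ℝ] (Fin n → ℝ) :=
  (dotProductBilin ℝ ℝ (castVec a)).projAlong (castVec p)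

theorem castVec_intProj (x : Fin n → ℤ) :
    castVec (intProj a p x) = realProj a p (castVec x) := by
  rw [intProj, realProj, LinearMap.projAlong_apply, LinearMap.projAlong_apply, map_sub,
    castVec_zsmul, dotProductBilin_apply_apply, dotProductBilin_apply_apply, castVec_dotProduct]

variable {a p}

theorem ker_realProj (ha : a ⬝ᵥ p = 1) : LinearMap.ker (realProj a p) = ℝ ∙ castVec p :=
  LinearMap.ker_projAlong (castVec_dotProduct_eq_one ha)

theorem eq_smul_of_castVec_mem_span (ha : a ⬝ᵥ p = 1) {x : Fin n → ℤ}
    (hx : castVec x ∈ ℝ ∙ castVec p) : x = (a ⬝ᵥ x) • p := by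
  rw [← ker_realProj ha, LinearMap.mem_ker, ← castVec_intProj, castVec_eq_zero, intProj,
    LinearMap.projAlong_apply, sub_eq_zero] at hx
  exact hx

theorem image_castVec_image_intProj (H : Finset (Fin n → ℤ)) :
    castVec '' ↑(H.image (intProj a p)) = realProj a p '' (castVec '' ↑H) := by
  rw [Finset.coe_image, Set.image_image, Set.image_image]
  exact Set.image_congr fun x _ => castVec_intProj a p x

theorem cone_image_intProj (H : Finset (Fin n → ℤ)) :
    cone (H.image (intProj a p)) = (cone H).map (realProj a p) := by
  rw [cone, image_castVec_image_intProj]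
  exact span_image ((realProj a p).restrictScalars _)

theorem realSpan_image_intProj (H : Finset (Fin n → ℤ)) :
    realSpan (H.image (intProj a p)) = (realSpan H).map (realProj a p) := by
  rw [realSpan, image_castVec_image_intProj, span_image]

end Projection

variable {H : Finset (Fin n → ℤ)} {a p : Fin n → ℤ}

theorem castVec_mem_cone {h : Fin n → ℤ} (hh : h ∈ H) : castVec h ∈ cone H :=
  PointedCone.subset_hull ⟨h, hh, rfl⟩

theorem isIntGenerating_image_intProj (hIG : IsIntGenerating H) (hpH : p ∈ H)
    (ha : a ⬝ᵥ p = 1) : IsIntGenerating (H.image (intProj a p)) := by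
  intro x hx
  rw [cone_image_intProj] at hx
  obtain ⟨y, hy, hyx⟩ := PointedCone.mem_map.1 hx
  have hfix : intProj a p x = x := castVec_injective <| by
    rw [castVec_intProj, ← hyx, realProj,
      LinearMap.projAlong_projAlong (castVec_dotProduct_eq_one ha)]
  -- adding a large enough integral multiple of `p` lifts `x` back into `cone H`
  set k := ⌈castVec a ⬝ᵥ y⌉
  have hlift : castVec (x + k • p) ∈ cone H := by
    have : castVec (x + k • p) = y + ((k : ℝ) - castVec a ⬝ᵥ y) • castVec p := by
      rw [map_add, castVec_zsmul, ← hyx, realProj, LinearMap.projAlong_apply,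
        dotProductBilin_apply_apply, sub_smul]
      abel
    rw [this]
    exact add_mem hy
      (PointedCone.smul_mem _ (sub_nonneg.2 (Int.le_ceil _)) (castVec_mem_cone hpH))
  have hmap := mem_map_of_mem (f := (intProj a p).restrictScalars ℕ) (hIG _ hlift)
  rwa [← span_image, LinearMap.coe_restrictScalars, map_add, map_zsmul, hfix, intProj,
    LinearMap.projAlong_self (by simpa using ha), smul_zero, add_zero, ← Finset.coe_image] at hmap

theorem eq_smul_and_nonneg_of_mem (hlin : (cone H).lineal = ⊥) (ha : a ⬝ᵥ p = 1)
    (hp : castVec p ∈ cone H) {h : Fin n → ℤ} (hh : h ∈ H)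
    (hhp : castVec h ∈ ℝ ∙ castVec p) :
    h = (a ⬝ᵥ h) • p ∧ 0 ≤ a ⬝ᵥ h := by
  have heq := eq_smul_of_castVec_mem_span ha hhp
  refine ⟨heq, not_lt.1 fun hneg => ?_⟩
  have hlin_h : castVec h ∈ (cone H).lineal := by
    refine PointedCone.mem_lineal.2 ⟨castVec_mem_cone hh, ?_⟩
    rw [heq, castVec_zsmul, ← neg_smul, ← Int.cast_neg]
    exact PointedCone.smul_mem _ (by exact_mod_cast (neg_pos.2 hneg).le) hp
  rw [hlin, mem_bot, castVec_eq_zero] at hlin_h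
  simp [hlin_h] at hneg

theorem mem_of_isFaceOf (hIG : IsIntGenerating H) (hlin : (cone H).lineal = ⊥)
    (ha : a ⬝ᵥ p = 1) (hp : castVec p ∈ cone H)
    (hface : (cone H ⊓ ↑(ℝ ∙ castVec p)).IsFaceOf (cone H)) : p ∈ H := by
  obtain ⟨c, -, hc⟩ := mem_span_finset.1 (hIG p hp)
  have hline : ∀ h ∈ H, c h ≠ 0 → h = (a ⬝ᵥ h) • p ∧ 0 ≤ a ⬝ᵥ h := by
    intro h hh hch
    refine eq_smul_and_nonneg_of_mem hlin ha hp hh ?_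
    have hmem : castVec (c h • h) ∈ ℝ ∙ castVec p := by
      refine (hface.mem_of_add_mem_left (y := castVec (∑ k ∈ H.erase h, c k • k)) ?_ ?_ ?_).2
      · rw [castVec_nsmul]
        exact PointedCone.smul_mem _ (Nat.cast_nonneg _) (castVec_mem_cone hh)
      · rw [map_sum]
        refine sum_mem fun k hk => ?_
        rw [castVec_nsmul]
        exact PointedCone.smul_mem _ (Nat.cast_nonneg _)
          (castVec_mem_cone (Finset.mem_of_mem_erase hk))
      · rw [← map_add, Finset.add_sum_erase H (fun k => c k • k) hh, hc]
        exact ⟨hp, mem_span_singleton_self _⟩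
    rwa [castVec_nsmul, smul_mem_iff _ (Nat.cast_ne_zero.2 hch)] at hmem
  have hterm : ∀ h ∈ H, 0 ≤ (c h : ℤ) * (a ⬝ᵥ h) := by
    intro h hh
    by_cases hch : c h = 0
    · simp [hch]
    · exact mul_nonneg (Nat.cast_nonneg _) (hline h hh hch).2
  have hsum : ∑ h ∈ H, (c h : ℤ) * (a ⬝ᵥ h) = 1 := by
    rw [← ha, ← hc, dotProduct_sum]
    exact Finset.sum_congr rfl fun h _ => by rw [dotProduct_smul, nsmul_eq_mul]
  obtain ⟨h, hh, hne⟩ := Finset.exists_ne_zero_of_sum_ne_zero (hsum ▸ one_ne_zero)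
  have hle := Finset.single_le_sum hterm hh
  have hone : (c h : ℤ) * (a ⬝ᵥ h) = 1 := by have := hterm h hh; omega
  have hch : c h ≠ 0 := by rintro h0; simp [h0] at hone
  obtain ⟨heq, hnonneg⟩ := hline h hh hch
  rwa [heq, Int.eq_one_of_mul_eq_one_left hnonneg hone, one_smul] at hh

theorem exists_mem_dotProduct_eq_one_isFaceOf (hIG : IsIntGenerating H)
    (hlin : (cone H).lineal = ⊥) (hH : realSpan H ≠ ⊥) :
    ∃ p ∈ H, ∃ a : Fin n → ℤ, a ⬝ᵥ p = 1 ∧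
      (cone H ⊓ ↑(ℝ ∙ castVec p)).IsFaceOf (cone H) := by
  have hT : PointedCone.hull ℝ ((H.image castVec : Finset _) : Set (Fin n → ℝ)) ≠ ⊥ := by
    rw [Ne, span_eq_bot, Finset.coe_image]
    rwa [Ne, realSpan, span_eq_bot] at hH
  obtain ⟨e, he, he0, hface⟩ := PointedCone.exists_isFaceOf_inf_span_singleton
    (by rwa [Finset.coe_image]) hT
  rw [Finset.coe_image] at hface
  obtain ⟨e, heH, rfl⟩ := Finset.mem_image.1 he
  obtain ⟨g, hg, p, a, rfl, ha⟩ :=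
    exists_eq_nsmul_dotProduct_eq_one (e := e) fun h0 => he0 (by rw [h0, map_zero])
  have hg' : (0 : ℝ) < g := Nat.cast_pos.2 hg
  rw [castVec_nsmul, span_singleton_smul_eq (IsUnit.mk0 _ hg'.ne')] at hface
  have hp : castVec p ∈ cone H := by
    have := castVec_mem_cone (H := H) heH
    rwa [castVec_nsmul, PointedCone.smul_mem_iff _ hg'] at this
  exact ⟨p, mem_of_isFaceOf hIG hlin ha hp hface, a, ha, hface⟩

theorem exists_subset_card_le_finrank (H : Finset (Fin n → ℤ)) (hIG : IsIntGenerating H)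
    (hlin : (cone H).lineal = ⊥) :
    ∃ B ⊆ H, B.card ≤ finrank ℝ (realSpan H) ∧
      ∀ x, castVec x ∈ realSpan H → x ∈ span ℤ (B : Set (Fin n → ℤ)) := by
  by_cases hH : realSpan H = ⊥
  · refine ⟨∅, Finset.empty_subset _, Nat.zero_le _, fun x hx => ?_⟩
    rw [hH, mem_bot, castVec_eq_zero] at hx
    exact hx ▸ zero_mem _
  obtain ⟨p, hpH, a, ha, hface⟩ := exists_mem_dotProduct_eq_one_isFaceOf hIG hlin hH
  have hp0 : castVec p ≠ 0 := fun h0 => by simp [castVec_eq_zero.1 h0] at ha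
  rw [← ker_realProj ha] at hface
  have hlt : finrank ℝ (realSpan (H.image (intProj a p))) < finrank ℝ (realSpan H) := by
    rw [realSpan_image_intProj]
    refine finrank_map_lt (subset_span ⟨p, hpH, rfl⟩) hp0 ?_
    rw [← LinearMap.mem_ker, ker_realProj ha]
    exact mem_span_singleton_self _
  obtain ⟨B', hB', hcard, hspan⟩ := exists_subset_card_le_finrank (H.image (intProj a p))
    (isIntGenerating_image_intProj hIG hpH ha)
    (by rw [cone_image_intProj]; exact PointedCone.lineal_map_eq_bot hface)
  obtain ⟨B, hBH, hinj, rfl⟩ := Finset.exists_subset_injOn_image_eq_of_surjOn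
    (f := intProj a p) H B' fun y hy => by simpa using hB' hy
  refine ⟨insert p B, Finset.insert_subset hpH hBH, ?_, fun x hx => ?_⟩
  · rw [Finset.card_image_of_injOn hinj] at hcard
    exact (Finset.card_insert_le _ _).trans (by omega)
  · have hx' : intProj a p x ∈ span ℤ (intProj a p '' ↑B) := by
      rw [← Finset.coe_image]
      refine hspan _ ?_
      rw [castVec_intProj, realSpan_image_intProj]
      exact mem_map_of_mem hx
    rw [Finset.coe_insert]
    exact LinearMap.mem_span_insert_of_projAlong_mem (by simpa using ha) hx'
termination_by finrank ℝ (realSpan H)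

theorem linearIndependent_of_card_le_finrank {B : Finset (Fin n → ℤ)} (hBH : B ⊆ H)
    (hcard : B.card ≤ finrank ℝ (realSpan H))
    (hspan : ∀ h ∈ H, h ∈ span ℤ (B : Set (Fin n → ℤ))) :
    LinearIndependent ℤ (fun b : B => (b : Fin n → ℤ)) := by
  have hB : realSpan B = realSpan H := by
    refine le_antisymm (span_mono (Set.image_mono hBH)) (span_le.2 ?_)
    rintro _ ⟨h, hh, rfl⟩
    have : castVec h ∈ span ℤ (castVec '' ↑B) := by
      rw [span_image]
      exact mem_map_of_mem (hspan h hh)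
    exact span_le_restrictScalars ℤ ℝ _ this
  have hR : LinearIndependent ℝ (fun b : B => castVec (b : Fin n → ℤ)) := by
    have hrange : Set.range (fun b : B => castVec (b : Fin n → ℤ)) = castVec '' ↑B := by
      ext; simp
    rw [linearIndependent_iff_card_le_finrank_span, Set.finrank, hrange]
    change Fintype.card B ≤ finrank ℝ (realSpan B)
    rwa [hB, Fintype.card_coe]
  exact LinearIndependent.of_comp castVec (hR.restrict_scalars' ℤ)

end IntegralGeneratingSet

open IntegralGeneratingSet in
theorem stmt0 {n : ℕ} (H : Finset (Fin n → ℤ))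
    (hIGSC : ∀ x : Fin n → ℤ, (fun i => (x i : ℝ)) ∈ intCone H →
      ∃ c : (Fin n → ℤ) → ℕ, x = ∑ h ∈ H, c h • h)
    (hpointed : ∀ v : Fin n → ℝ, v ∈ intCone H → -v ∈ intCone H → v = 0) :
    ∃ B ⊆ H,
      LinearIndependent ℤ (fun b : {v // v ∈ B} => (b : Fin n → ℤ)) ∧
      ∀ x : Fin n → ℤ,
        (fun i => (x i : ℝ)) ∈
          Submodule.span ℝ ((fun (v : Fin n → ℤ) (i : Fin n) => (v i : ℝ)) '' ↑H) →
        ∃ c : (Fin n → ℤ) → ℤ, x = ∑ h ∈ B, c h • h := by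
  have hIG : IsIntGenerating H := fun x hx => by
    obtain ⟨c, rfl⟩ := hIGSC x (mem_intCone_iff.2 hx)
    exact sum_mem fun h hh => smul_mem _ _ (subset_span hh)
  have hlin : (cone H).lineal = ⊥ := (Submodule.eq_bot_iff _).2 fun v hv =>
    hpointed v (mem_intCone_iff.2 hv.1) (mem_intCone_iff.2 hv.2)
  obtain ⟨B, hBH, hcard, hspan⟩ := exists_subset_card_le_finrank H hIG hlin
  refine ⟨B, hBH, linearIndependent_of_card_le_finrank hBH hcard fun h hh =>
    hspan h (subset_span ⟨h, hh, rfl⟩), fun x hx => ?_⟩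
  obtain ⟨c, -, hc⟩ := mem_span_finset.1 (hspan x hx)
  exact ⟨c, hc.symm⟩
end
end

section
/- Let P ⊆ ℝ^n be a polyhedron with the integer decomposition property, whose affine hull equals {x : Ax = b} for an integral matrix A ∈ ℤ^{m×n} and integral vector b ∈ ℤ^m with b ≠ 0 and m ≥ 1. Let g = gcd of the entries of b. Then every integral vector in the cone generated by P ∩ ℤ^n can be written as a conic combination of vectors of P ∩ ℤ^n with all coefficients in (1/g)ℤ. -/
open scoped Classical

noncomputable section

/-- `scaleSet k P` is the set `kP` of sums `∑ λ_p • p` over finitely many points of `P`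
with `λ ≥ 0` and `∑ λ_p = k`. -/
def scaleSet {n : ℕ} (k : ℝ) (P : Set (Fin n → ℝ)) : Set (Fin n → ℝ) :=
  {x | ∃ (s : Finset (Fin n → ℝ)) (c : (Fin n → ℝ) → ℝ),
    (↑s ⊆ P) ∧ (∀ p, 0 ≤ c p) ∧ (∑ p ∈ s, c p = k) ∧ x = ∑ p ∈ s, c p • p}

/-- The integer decomposition property. -/
def IDP {n : ℕ} (P : Set (Fin n → ℝ)) : Prop :=
  ∀ k : ℕ, 1 ≤ k → ∀ x : Fin n → ℤ,
    (fun i => (x i : ℝ)) ∈ scaleSet (k : ℝ) P →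
    ∃ f : Fin k → (Fin n → ℤ), (∀ i, (fun j => (f i j : ℝ)) ∈ P) ∧ x = ∑ i, f i

lemma bezout_finset {ι : Type*} (s : Finset ι) (f : ι → ℤ) :
    ∃ u : ι → ℤ, ∑ i ∈ s, u i * f i = s.gcd f := by
  classical
  induction s using Finset.induction_on with
  | empty => exact ⟨0, by simp⟩
  | @insert a s ha ih =>
    obtain ⟨u, hu⟩ := ih
    refine ⟨fun i => if i = a then Int.gcdA (f a) (s.gcd f) else Int.gcdB (f a) (s.gcd f) * u i, ?_⟩
    rw [Finset.sum_insert ha, Finset.gcd_insert]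
    simp only [if_pos rfl]
    rw [Finset.sum_congr rfl (fun i hi => by rw [if_neg (by rintro rfl; exact ha hi)])]
    have h3 : ∑ i ∈ s, Int.gcdB (f a) (s.gcd f) * u i * f i
        = Int.gcdB (f a) (s.gcd f) * ∑ i ∈ s, u i * f i := by
      rw [Finset.mul_sum]; exact Finset.sum_congr rfl (fun i _ => by ring)
    rw [h3, hu, ← Int.coe_gcd, Int.gcd_eq_gcd_ab]
    simp only [if_true]
    ring

lemma gcd_pos_of_ne_zero {m : ℕ} (b : Fin m → ℤ) (hb : b ≠ 0) : 0 < Finset.univ.gcd b := by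
  have h0 : Finset.univ.gcd b ≠ 0 := by
    intro h
    rw [Finset.gcd_eq_zero_iff] at h
    exact hb (funext fun i => h i (Finset.mem_univ i))
  have h1 : 0 ≤ Finset.univ.gcd b := by
    rw [← Finset.normalize_gcd, ← Int.abs_eq_normalize]; exact abs_nonneg _
  omega

theorem stmt1 {n m : ℕ} (hm : 1 ≤ m) (P : Set (Fin n → ℝ))
    (A : Matrix (Fin m) (Fin n) ℤ) (b : Fin m → ℤ) (hb : b ≠ 0)
    (haff : (affineSpan ℝ P : Set (Fin n → ℝ)) =
      {x | (A.map (Int.cast : ℤ → ℝ)).mulVec x = fun i => (b i : ℝ)})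
    (hIDP : IDP P) :
    ∀ x : Fin n → ℤ,
      -- `x` is an integral vector in the cone generated by `P ∩ ℤ^n`
      (∃ (s : Finset (Fin n → ℤ)) (c : (Fin n → ℤ) → ℝ),
        (∀ p ∈ s, (fun j => (p j : ℝ)) ∈ P) ∧ (∀ p, 0 ≤ c p) ∧
        (fun i => (x i : ℝ)) = ∑ p ∈ s, c p • (fun j => (p j : ℝ))) →
      -- then `x` is a conic combination of points of `P ∩ ℤ^n` with coefficients in `(1/g)ℤ`
      ∃ (s : Finset (Fin n → ℤ)) (c : (Fin n → ℤ) → ℕ),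
        (∀ p ∈ s, (fun j => (p j : ℝ)) ∈ P) ∧
        (fun i => (x i : ℝ)) =
          ∑ p ∈ s, ((c p : ℝ) / ((Finset.univ.gcd b : ℤ) : ℝ)) • (fun j => (p j : ℝ)) := by
  classical
  set g : ℤ := Finset.univ.gcd b with hgdef
  have hg : 0 < g := gcd_pos_of_ne_zero b hb
  have hgR : (0:ℝ) < (g:ℝ) := by exact_mod_cast hg
  rintro x ⟨s, c, hP, hc, hx⟩
  -- each point of s satisfies A p = b
  have hAp : ∀ p ∈ s, ∀ i, ∑ j, (A i j : ℝ) * (p j : ℝ) = (b i : ℝ) := by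
    intro p hp i
    have h1 : (fun j => (p j : ℝ)) ∈ (affineSpan ℝ P : Set (Fin n → ℝ)) :=
      subset_affineSpan ℝ P (hP p hp)
    rw [haff] at h1
    have := congrFun h1 i
    simpa [Matrix.mulVec, dotProduct, Matrix.map_apply] using this
  set t : ℝ := ∑ p ∈ s, c p with htdef
  have ht0 : 0 ≤ t := Finset.sum_nonneg fun p _ => hc p
  -- component expansion of x
  have hxj : ∀ j, (x j : ℝ) = ∑ p ∈ s, c p * (p j : ℝ) := by
    intro j
    have := congrFun hx j
    simpa [Finset.sum_apply] using this
  -- key equation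
  have key : ∀ i, ((A.mulVec x) i : ℝ) = t * (b i : ℝ) := by
    intro i
    have h1 : ((A.mulVec x) i : ℝ) = ∑ j, (A i j : ℝ) * (x j : ℝ) := by
      simp [Matrix.mulVec, dotProduct]
    rw [h1]
    calc ∑ j, (A i j : ℝ) * (x j : ℝ)
        = ∑ j, ∑ p ∈ s, c p * ((A i j : ℝ) * (p j : ℝ)) := by
          refine Finset.sum_congr rfl fun j _ => ?_
          rw [hxj j, Finset.mul_sum]
          exact Finset.sum_congr rfl fun p _ => by ring
      _ = ∑ p ∈ s, c p * ∑ j, (A i j : ℝ) * (p j : ℝ) := by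
          rw [Finset.sum_comm]
          exact Finset.sum_congr rfl fun p _ => by rw [Finset.mul_sum]
      _ = ∑ p ∈ s, c p * (b i : ℝ) := Finset.sum_congr rfl fun p hp => by rw [hAp p hp i]
      _ = t * (b i : ℝ) := by rw [← Finset.sum_mul]
  -- bezout: g * t is a nonnegative integer
  obtain ⟨u, hu⟩ := bezout_finset Finset.univ b
  set M : ℤ := ∑ i, u i * (A.mulVec x) i with hMdef
  have hM : (M : ℝ) = t * (g : ℝ) := by
    have : (M : ℝ) = ∑ i, (u i : ℝ) * ((A.mulVec x) i : ℝ) := by rw [hMdef]; push_cast; rfl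
    rw [this]
    calc ∑ i, (u i : ℝ) * ((A.mulVec x) i : ℝ)
        = ∑ i, (u i : ℝ) * (t * (b i : ℝ)) := Finset.sum_congr rfl fun i _ => by rw [key i]
      _ = t * ∑ i, ((u i * b i : ℤ) : ℝ) := by
          rw [Finset.mul_sum]; exact Finset.sum_congr rfl fun i _ => by push_cast; ring
      _ = t * (g : ℝ) := by rw [← Int.cast_sum, hu]
  have hM0 : 0 ≤ M := by
    have : (0:ℝ) ≤ (M:ℝ) := hM ▸ mul_nonneg ht0 hgR.le
    exact_mod_cast this
  rcases eq_or_lt_of_le hM0 with hM0' | hMpos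
  · -- t = 0, hence x = 0
    have ht : t = 0 := by
      have : (0:ℝ) = t * (g:ℝ) := by rw [← hM, ← hM0']; simp
      have := this.symm
      rcases mul_eq_zero.1 this.symm.symm with h | h
      · exact h
      · exact absurd h hgR.ne'
    have hsum0 : ∑ p ∈ s, c p = 0 := by rw [← htdef]; exact ht
    have hczero : ∀ p ∈ s, c p = 0 :=
      fun p hp => (Finset.sum_eq_zero_iff_of_nonneg fun q _ => hc q).1 hsum0 p hp
    refine ⟨∅, fun _ => 0, by simp, ?_⟩
    rw [hx]
    simp only [Finset.sum_empty]
    exact Finset.sum_eq_zero fun p hp => by rw [hczero p hp, zero_smul]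
  · -- N := M.toNat ≥ 1
    set N : ℕ := M.toNat with hNdef
    have hN1 : 1 ≤ N := by omega
    have hNR : (N : ℝ) = t * (g : ℝ) := by rw [← hM]; exact_mod_cast (Int.toNat_of_nonneg hM0)
    -- g • x ∈ scaleSet N P
    set x' : Fin n → ℤ := fun i => g * x i with hx'def
    have hinj : Function.Injective (fun (p : Fin n → ℤ) => (fun j => (p j : ℝ))) := by
      intro p q h
      funext j
      have h2 : ((p j : ℝ)) = ((q j : ℝ)) := congrFun h j
      exact_mod_cast h2
    have hmem : (fun i => (x' i : ℝ)) ∈ scaleSet (N : ℝ) P := by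
      refine ⟨s.image (fun p => (fun j => (p j : ℝ))),
        fun q => (g:ℝ) * c (fun j => ⌊q j⌋), ?_, ?_, ?_, ?_⟩
      · intro q hq
        obtain ⟨p, hp, rfl⟩ := Finset.mem_image.1 hq
        exact hP p hp
      · exact fun q => mul_nonneg hgR.le (hc _)
      · rw [Finset.sum_image (fun p _ q _ h => hinj h)]
        have : ∀ p ∈ s, (g:ℝ) * c (fun j => ⌊((p j : ℝ))⌋) = (g:ℝ) * c p := by
          intro p _
          have hfl : (fun j => ⌊((p j : ℝ))⌋) = p := funext fun j => Int.floor_intCast _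
          rw [hfl]
        rw [Finset.sum_congr rfl this, ← Finset.mul_sum, ← htdef, hNR]
        ring
      · rw [Finset.sum_image (fun p _ q _ h => hinj h)]
        have hrw : ∀ p ∈ s, ((g:ℝ) * c (fun j => ⌊((p j : ℝ))⌋)) • (fun j => ((p j : ℝ)))
            = ((g:ℝ) * c p) • (fun j => ((p j : ℝ))) := by
          intro p _
          have hfl : (fun j => ⌊((p j : ℝ))⌋) = p := funext fun j => Int.floor_intCast _
          rw [hfl]
        rw [Finset.sum_congr rfl hrw]
        funext i
        rw [Finset.sum_apply]
        simp only [hx'def, Pi.smul_apply, smul_eq_mul]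
        push_cast
        rw [hxj i, Finset.mul_sum]
        exact Finset.sum_congr rfl fun p _ => by ring
    obtain ⟨f, hfP, hfsum⟩ := hIDP N hN1 x' hmem
    refine ⟨Finset.univ.image f, fun p => ((Finset.univ.filter (fun i => f i = p)).card), ?_, ?_⟩
    · intro p hp
      obtain ⟨i, _, rfl⟩ := Finset.mem_image.1 hp
      exact hfP i
    · have hsum : ∑ p ∈ Finset.univ.image f,
          ((Finset.univ.filter (fun i => f i = p)).card) • (fun j => (p j : ℝ))
          = ∑ i : Fin N, (fun j => ((f i j : ℝ))) := by
        rw [Finset.sum_comp (fun p : Fin n → ℤ => (fun j => (p j : ℝ))) f]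
      funext i
      rw [Finset.sum_apply]
      have h2 : ∀ p, ((((Finset.univ.filter (fun k => f k = p)).card : ℝ) / (g:ℝ)) •
          (fun j => (p j : ℝ))) i
          = (1/(g:ℝ)) * (((Finset.univ.filter (fun k => f k = p)).card • (fun j => (p j : ℝ))) i) := by
        intro p
        simp [Pi.smul_apply]
        ring
      rw [Finset.sum_congr rfl fun p _ => h2 p, ← Finset.mul_sum]
      have hsumi : ∑ p ∈ Finset.univ.image f,
          (((Finset.univ.filter (fun k => f k = p)).card • (fun j => (p j : ℝ))) i)
          = ∑ k : Fin N, (f k i : ℝ) := by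
        rw [← Finset.sum_apply i, hsum, Finset.sum_apply i]
      rw [hsumi]
      have h5 : (g * x i : ℤ) = ∑ k : Fin N, f k i := by
        have hx'i : x' i = (∑ k : Fin N, f k) i := by rw [hfsum]
        rw [Finset.sum_apply] at hx'i
        exact hx'i
      have h4 : ∑ k : Fin N, ((f k i : ℝ)) = ((g:ℝ) * (x i : ℝ)) := by exact_mod_cast h5.symm
      rw [h4]
      field_simp
end
end

section
/- Let D = (V,A) be a finite digraph, let F be a face of the dijoin polyhedron dij(D), and let C be the family of nonempty proper vertex subsets U with δ⁻(U) = ∅ and F ⊆ {x : x(δ⁺(U)) = 1}. Then C is a crossing family: if U, W ∈ C with U ∩ W ≠ ∅ and U ∪ W ≠ V, then U ∩ W ∈ C and U ∪ W ∈ C. -/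
open scoped Classical

noncomputable section

variable {V A : Type*}

/-- Arcs leaving `U`: tail in `U`, head outside `U`. -/
def deltaPlus [Fintype A] [DecidableEq V] (tl hd : A → V) (U : Finset V) : Finset A :=
  Finset.univ.filter (fun a => tl a ∈ U ∧ hd a ∉ U)

/-- Arcs entering `U`: head in `U`, tail outside `U`. -/
def deltaMinus [Fintype A] [DecidableEq V] (tl hd : A → V) (U : Finset V) : Finset A :=
  Finset.univ.filter (fun a => hd a ∈ U ∧ tl a ∉ U)

/-- A source has no incoming arcs. -/
def IsSource (tl hd : A → V) (v : V) : Prop := ∀ a, hd a ≠ v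

/-- A sink has no outgoing arcs. -/
def IsSink (tl hd : A → V) (v : V) : Prop := ∀ a, tl a ≠ v

/-- The dijoin polyhedron of the digraph given by `tl`, `hd`. -/
def dijP [Fintype V] [Fintype A] [DecidableEq V] (tl hd : A → V) : Set (A → ℝ) :=
  {x | (∀ a, 0 ≤ x a) ∧
    ∀ U : Finset V, U.Nonempty → U ≠ Finset.univ → deltaMinus tl hd U = ∅ →
      1 ≤ ∑ a ∈ deltaPlus tl hd U, x a}

lemma deltaMinus_inter_empty [Fintype A] [DecidableEq V] (tl hd : A → V) {U W : Finset V}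
    (hU : deltaMinus tl hd U = ∅) (hW : deltaMinus tl hd W = ∅) :
    deltaMinus tl hd (U ∩ W) = ∅ := by
  ext a
  simp only [deltaMinus, Finset.mem_filter, Finset.mem_univ, true_and, Finset.mem_inter,
    Finset.notMem_empty, iff_false]
  rintro ⟨⟨h1, h2⟩, h3⟩
  by_cases ht : tl a ∈ U
  · have : a ∈ deltaMinus tl hd W := by
      simp [deltaMinus, h2]; intro h; exact h3 ⟨ht, h⟩
    simp [hW] at this
  · have : a ∈ deltaMinus tl hd U := by simp [deltaMinus, h1, ht]
    simp [hU] at this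

lemma deltaMinus_union_empty [Fintype A] [DecidableEq V] (tl hd : A → V) {U W : Finset V}
    (hU : deltaMinus tl hd U = ∅) (hW : deltaMinus tl hd W = ∅) :
    deltaMinus tl hd (U ∪ W) = ∅ := by
  ext a
  simp only [deltaMinus, Finset.mem_filter, Finset.mem_univ, true_and, Finset.mem_union,
    Finset.notMem_empty, iff_false, not_and, not_not]
  rintro (h1 | h1)
  · by_contra h2
    push_neg at h2
    have : a ∈ deltaMinus tl hd U := by simp [deltaMinus, h1, h2.1]
    simp [hU] at this
  · by_contra h2
    push_neg at h2
    have : a ∈ deltaMinus tl hd W := by simp [deltaMinus, h1, h2.2]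
    simp [hW] at this

lemma submod [Fintype A] [DecidableEq V] (tl hd : A → V) (U W : Finset V)
    (x : A → ℝ) (hx : ∀ a, 0 ≤ x a) :
    ∑ a ∈ deltaPlus tl hd (U ∩ W), x a + ∑ a ∈ deltaPlus tl hd (U ∪ W), x a ≤
      ∑ a ∈ deltaPlus tl hd U, x a + ∑ a ∈ deltaPlus tl hd W, x a := by
  simp only [deltaPlus, Finset.sum_filter]
  rw [← Finset.sum_add_distrib, ← Finset.sum_add_distrib]
  apply Finset.sum_le_sum
  intro a _
  by_cases h1 : tl a ∈ U <;> by_cases h2 : tl a ∈ W <;>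
    by_cases h3 : hd a ∈ U <;> by_cases h4 : hd a ∈ W <;>
    simp [h1, h2, h3, h4] <;> linarith [hx a]

theorem stmt4 [Fintype V] [Fintype A] [DecidableEq V] (tl hd : A → V)
    (F : Set (A → ℝ))
    -- `F` is an (exposed) face of the dijoin polyhedron
    (hface : ∃ (c : A → ℝ) (d : ℝ), (∀ x ∈ dijP tl hd, d ≤ ∑ a, c a * x a) ∧
      F = {x ∈ dijP tl hd | ∑ a, c a * x a = d})
    (U W : Finset V)
    (hUne : U.Nonempty) (hUpr : U ≠ Finset.univ) (hUm : deltaMinus tl hd U = ∅)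
    (hUF : ∀ x ∈ F, ∑ a ∈ deltaPlus tl hd U, x a = 1)
    (hWne : W.Nonempty) (hWpr : W ≠ Finset.univ) (hWm : deltaMinus tl hd W = ∅)
    (hWF : ∀ x ∈ F, ∑ a ∈ deltaPlus tl hd W, x a = 1)
    (hcap : (U ∩ W).Nonempty) (hcup : U ∪ W ≠ Finset.univ) :
    ((U ∩ W).Nonempty ∧ U ∩ W ≠ Finset.univ ∧ deltaMinus tl hd (U ∩ W) = ∅ ∧
      ∀ x ∈ F, ∑ a ∈ deltaPlus tl hd (U ∩ W), x a = 1) ∧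
    ((U ∪ W).Nonempty ∧ U ∪ W ≠ Finset.univ ∧ deltaMinus tl hd (U ∪ W) = ∅ ∧
      ∀ x ∈ F, ∑ a ∈ deltaPlus tl hd (U ∪ W), x a = 1) := by
  obtain ⟨c, d, _, hFeq⟩ := hface
  have hFsub : ∀ x ∈ F, x ∈ dijP tl hd := by
    intro x hx; rw [hFeq] at hx; exact hx.1
  have hcapm := deltaMinus_inter_empty tl hd hUm hWm
  have hcupm := deltaMinus_union_empty tl hd hUm hWm
  have hcappr : U ∩ W ≠ Finset.univ := by
    intro h; apply hUpr
    have : U ∩ W ⊆ U := Finset.inter_subset_left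
    rw [h] at this
    exact Finset.univ_subset_iff.mp this
  have hcupne : (U ∪ W).Nonempty := hUne.mono Finset.subset_union_left
  have key : ∀ x ∈ F, ∑ a ∈ deltaPlus tl hd (U ∩ W), x a = 1 ∧
      ∑ a ∈ deltaPlus tl hd (U ∪ W), x a = 1 := by
    intro x hx
    have hdij := hFsub x hx
    have h1 := hdij.2 (U ∩ W) hcap hcappr hcapm
    have h2 := hdij.2 (U ∪ W) hcupne hcup hcupm
    have h3 := submod tl hd U W x hdij.1
    have h4 := hUF x hx
    have h5 := hWF x hx
    constructor <;> linarith
  exact ⟨⟨hcap, hcappr, hcapm, fun x hx => (key x hx).1⟩,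
    ⟨hcupne, hcup, hcupm, fun x hx => (key x hx).2⟩⟩
end
end

section
/- Let D = (V,A) be a bipartite digraph with sources S and sinks T, and let b ∈ ℤ^V with b_v = 1 for every sink v and b_u ≥ 1 for every source u. Suppose b(S) = b(T) and b(U ∩ S) − b(U ∩ T) ≥ 1 for every nonempty proper U ⊂ V with δ⁻(U) = ∅. Then for every arc a = (u,w) ∈ A, there exists a perfect b-matching x ∈ {0,1}^A with x_a = 1. -/
open scoped Classical

noncomputable section

variable {V A : Type*}

/-- The set of arcs incident to a vertex. -/
def deltaV [Fintype A] [DecidableEq V] (tl hd : A → V) (v : V) : Finset A :=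
  Finset.univ.filter (fun a => tl a = v ∨ hd a = v)

/-!
Fix the arc `a = (u₀, w₀)`, lower the demand of `u₀` by one and set `w₀` aside. It suffices that
every other sink picks an arc entering it so that each source `u` is the tail of exactly
`b u - [u = u₀]` picked arcs; adding `a` then gives the matching. Such a choice exists by Hall's
theorem applied to `b u - [u = u₀]` copies of each source: for a nonempty set `W` of sinks other
than `w₀` with in-neighbourhood `N`, no arc enters `W ∪ N` and `w₀ ∉ W ∪ N`, so the cut condition
gives `b(N) ≥ |W| + 1`. Since the reduced demands of the sources sum to `b(T) - 1 = |T| - 1`, the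
number of sinks to be covered, every copy is used.
-/

open Finset

theorem Finset.exists_fiber_card_le_of_hall {ι β α : Type*} [Fintype ι] [DecidableEq α]
    (r : ι → Finset β) (κ : β → α) (c : α → ℕ)
    (hall : ∀ s : Finset ι, #s ≤ ∑ x ∈ s.biUnion (fun i => (r i).image κ), c x) :
    ∃ f : ι → β, (∀ i, f i ∈ r i) ∧ ∀ x, #{i | κ (f i) = x} ≤ c x := by
  -- Hall's theorem for `c x` copies `⟨x, n⟩` of each `x`
  let slots : ι → Finset (Σ _ : α, ℕ) := fun i => ((r i).image κ).sigma fun x => range (c x)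
  have hslots : ∀ s : Finset ι, #s ≤ #(s.biUnion slots) := by
    intro s
    have : s.biUnion slots = (s.biUnion fun i => (r i).image κ).sigma fun x => range (c x) := by
      ext ⟨x, n⟩
      simp only [slots, mem_biUnion, mem_sigma]
      tauto
    simpa [this, card_sigma] using hall s
  obtain ⟨g, hg_inj, hg⟩ := (all_card_le_biUnion_card_iff_exists_injective slots).1 hslots
  have hκ : ∀ i, ∃ y ∈ r i, κ y = (g i).1 := fun i => mem_image.1 (mem_sigma.1 (hg i)).1
  choose f hf hfg using hκ
  refine ⟨f, hf, fun x => ?_⟩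
  calc #{i | κ (f i) = x} ≤ #(range (c x)) := by
        refine card_le_card_of_injOn (fun i => (g i).2) (fun i hi => ?_) (fun i hi j hj hij => ?_)
        · simpa [← hfg, (mem_filter.1 hi).2] using (mem_sigma.1 (hg i)).2
        · simp only [coe_filter, mem_univ, true_and, Set.mem_ofPred_eq] at hi hj
          exact hg_inj (Sigma.ext (by rw [← hfg, ← hfg, hi, hj]) (heq_of_eq hij))
    _ = c x := card_range _

theorem Finset.exists_fiber_card_eq_of_hall {ι β α : Type*} [Fintype ι] [DecidableEq α]
    (r : ι → Finset β) (κ : β → α) (c : α → ℕ) (S : Finset α) (hrS : ∀ i, ∀ y ∈ r i, κ y ∈ S)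
    (hall : ∀ s : Finset ι, #s ≤ ∑ x ∈ s.biUnion (fun i => (r i).image κ), c x)
    (hsum : ∑ x ∈ S, c x ≤ Fintype.card ι) :
    ∃ f : ι → β, (∀ i, f i ∈ r i) ∧ ∀ x ∈ S, #{i | κ (f i) = x} = c x := by
  obtain ⟨f, hf, hfc⟩ := exists_fiber_card_le_of_hall r κ c hall
  refine ⟨f, hf, (sum_eq_sum_iff_of_le fun x _ => hfc x).1 ?_⟩
  refine le_antisymm (sum_le_sum fun x _ => hfc x) ?_
  rwa [← card_eq_sum_card_fiberwise fun i _ => hrS i _ (hf i)]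

section Bipartite

variable {tl hd : A → V}

theorem isSource_tl (hbip : ∀ v, IsSource tl hd v ∨ IsSink tl hd v) (a : A) :
    IsSource tl hd (tl a) :=
  (hbip _).resolve_right fun h => h a rfl

theorem isSink_hd (hbip : ∀ v, IsSource tl hd v ∨ IsSink tl hd v) (a : A) :
    IsSink tl hd (hd a) :=
  (hbip _).resolve_left fun h => h a rfl

variable [DecidableEq V]

theorem card_sinks_ne_add_one [Fintype V] (hbip : ∀ v, IsSource tl hd v ∨ IsSink tl hd v)
    {b : V → ℤ} (hbT : ∀ v, IsSink tl hd v → b v = 1) (a : A) :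
    (Fintype.card {w // IsSink tl hd w ∧ w ≠ hd a} : ℤ) + 1 =
      ∑ v ∈ univ.filter (IsSink tl hd), b v := by
  have hT : ({w | IsSink tl hd w ∧ w ≠ hd a} : Finset V) =
      (univ.filter (IsSink tl hd)).erase (hd a) := by
    ext w
    simp [and_comm]
  rw [sum_congr rfl fun v hv => hbT v (mem_filter.1 hv).2, Fintype.card_subtype, hT, sum_const,
    ← card_erase_add_one (mem_filter.2 ⟨mem_univ _, isSink_hd hbip a⟩)]
  simp

variable [Fintype A]

theorem deltaV_of_isSource {v : V} (hv : IsSource tl hd v) :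
    deltaV tl hd v = ({a | tl a = v} : Finset A) := by
  ext a
  simp [deltaV, hv a]

theorem deltaV_of_isSink {v : V} (hv : IsSink tl hd v) :
    deltaV tl hd v = ({a | hd a = v} : Finset A) := by
  ext a
  simp [deltaV, hv a]

theorem not_isSource_of_isSink [Fintype V] {b : V → ℤ}
    (hcut : ∀ U : Finset V, U.Nonempty → U ≠ univ → deltaMinus tl hd U = ∅ →
      1 ≤ (∑ v ∈ U.filter (IsSource tl hd), b v) - (∑ v ∈ U.filter (IsSink tl hd), b v))
    (a : A) {v : V} (hv : IsSink tl hd v) : ¬ IsSource tl hd v := by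
  intro hv'
  have hne : ({v} : Finset V) ≠ univ := fun h => hv a (mem_singleton.1 (h ▸ mem_univ (tl a)))
  have hin : deltaMinus tl hd {v} = ∅ := by
    ext a'
    simp [deltaMinus, hv' a']
  have := hcut {v} (singleton_nonempty v) hne hin
  simp [filter_singleton, hv, hv'] at this

theorem card_add_one_le_sum_tl [Fintype V] (hbip : ∀ v, IsSource tl hd v ∨ IsSink tl hd v)
    {b : V → ℤ} (hbT : ∀ v, IsSink tl hd v → b v = 1)
    (hcut : ∀ U : Finset V, U.Nonempty → U ≠ univ → deltaMinus tl hd U = ∅ →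
      1 ≤ (∑ v ∈ U.filter (IsSource tl hd), b v) - (∑ v ∈ U.filter (IsSink tl hd), b v))
    (a : A) {W : Finset V} (hW : W.Nonempty) (hWT : ∀ w ∈ W, IsSink tl hd w) (ha : hd a ∉ W) :
    (#W : ℤ) + 1 ≤ ∑ u ∈ ({a' | hd a' ∈ W} : Finset A).image tl, b u := by
  set N := ({a' | hd a' ∈ W} : Finset A).image tl
  have hN : ∀ u ∈ N, IsSource tl hd u ∧ ¬ IsSink tl hd u := by
    simp only [N, mem_image]
    rintro _ ⟨a', -, rfl⟩
    exact ⟨isSource_tl hbip a', fun h => h a' rfl⟩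
  have hNW : ∀ a', hd a' ∈ W ∪ N → hd a' ∈ W := fun a' h =>
    (mem_union.1 h).resolve_right fun h' => (hN _ h').1 a' rfl
  have hU : W ∪ N ≠ univ := fun h => ha (hNW a (h ▸ mem_univ _))
  have hin : deltaMinus tl hd (W ∪ N) = ∅ := by
    refine eq_empty_of_forall_notMem fun a' h => ?_
    simp only [deltaMinus, mem_filter, mem_univ, true_and] at h
    exact h.2 (mem_union_right _ (mem_image.2 ⟨a', by simpa using hNW a' h.1, rfl⟩))
  have := hcut _ (hW.mono subset_union_left) hU hin
  rw [filter_union, filter_union,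
    filter_false_of_mem fun w hw => not_isSource_of_isSink hcut a (hWT w hw),
    filter_true_of_mem fun u hu => (hN u hu).1, filter_true_of_mem hWT,
    filter_false_of_mem fun u hu => (hN u hu).2, empty_union, union_empty,
    sum_congr rfl fun w hw => hbT w (hWT w hw)] at this
  simp only [sum_const, nsmul_eq_mul, mul_one] at this
  linarith

theorem card_le_sum_tl_of_sum_sub_one_le [Fintype V]
    (hbip : ∀ v, IsSource tl hd v ∨ IsSink tl hd v)
    {b : V → ℤ} (hbT : ∀ v, IsSink tl hd v → b v = 1)
    (hcut : ∀ U : Finset V, U.Nonempty → U ≠ univ → deltaMinus tl hd U = ∅ →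
      1 ≤ (∑ v ∈ U.filter (IsSource tl hd), b v) - (∑ v ∈ U.filter (IsSink tl hd), b v))
    (a : A) {c : V → ℕ} (hc : ∀ N : Finset V, ∑ u ∈ N, b u - 1 ≤ ∑ u ∈ N, (c u : ℤ))
    (s : Finset {w // IsSink tl hd w ∧ w ≠ hd a}) :
    #s ≤ ∑ u ∈ s.biUnion (fun w => ({a' | hd a' = w} : Finset A).image tl), c u := by
  rcases s.eq_empty_or_nonempty with rfl | hs
  · simp
  set W := s.map (Function.Embedding.subtype _)
  have hN : s.biUnion (fun w => ({a' | hd a' = w} : Finset A).image tl) =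
      ({a' | hd a' ∈ W} : Finset A).image tl := by
    ext u
    simp only [W, mem_biUnion, mem_image, mem_filter, mem_univ, true_and, mem_map,
      Function.Embedding.coe_subtype]
    constructor
    · rintro ⟨w, hw, a', hwa, rfl⟩
      exact ⟨a', ⟨w, hw, hwa.symm⟩, rfl⟩
    · rintro ⟨a', ⟨w, hw, hwa⟩, rfl⟩
      exact ⟨w, hw, a', hwa.symm, rfl⟩
  have hW := card_add_one_le_sum_tl hbip hbT hcut a (hs.map (f := Function.Embedding.subtype _))
    (by simp +contextual) (by simp +contextual)
  rw [card_map] at hW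
  zify
  rw [hN]
  linarith [hc (({a' | hd a' ∈ W} : Finset A).image tl)]

theorem exists_arc_assignment [Fintype V] (hbip : ∀ v, IsSource tl hd v ∨ IsSink tl hd v)
    {b : V → ℤ} (hbT : ∀ v, IsSink tl hd v → b v = 1) (hbS : ∀ v, IsSource tl hd v → 1 ≤ b v)
    (hbal : ∑ v ∈ univ.filter (IsSource tl hd), b v = ∑ v ∈ univ.filter (IsSink tl hd), b v)
    (hcut : ∀ U : Finset V, U.Nonempty → U ≠ univ → deltaMinus tl hd U = ∅ →
      1 ≤ (∑ v ∈ U.filter (IsSource tl hd), b v) - (∑ v ∈ U.filter (IsSink tl hd), b v))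
    (a : A) :
    ∃ F : {w // IsSink tl hd w ∧ w ≠ hd a} → A, (∀ w, hd (F w) = w) ∧
      ∀ u, IsSource tl hd u → (if tl a = u then 1 else 0) + (#{w | tl (F w) = u} : ℤ) = b u := by
  let c : V → ℕ := fun u => (b u - if tl a = u then 1 else 0).toNat
  have hc : ∀ u, IsSource tl hd u → (c u : ℤ) = b u - if tl a = u then 1 else 0 := fun u hu =>
    Int.toNat_of_nonneg (by have := hbS u hu; split_ifs <;> omega)
  have hcN (N : Finset V) : ∑ u ∈ N, b u - 1 ≤ ∑ u ∈ N, (c u : ℤ) :=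
    calc ∑ u ∈ N, b u - 1 ≤ ∑ u ∈ N, (b u - if tl a = u then 1 else 0) := by
          rw [sum_sub_distrib, sum_ite_eq]
          split_ifs <;> simp
      _ ≤ ∑ u ∈ N, (c u : ℤ) := sum_le_sum fun u _ => Int.self_le_toNat _
  have hcS : ∑ u ∈ univ.filter (IsSource tl hd), c u ≤
      Fintype.card {w // IsSink tl hd w ∧ w ≠ hd a} := by
    zify
    rw [sum_congr rfl fun u hu => hc u (mem_filter.1 hu).2, sum_sub_distrib, sum_ite_eq,
      if_pos (mem_filter.2 ⟨mem_univ _, isSource_tl hbip a⟩)]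
    linarith [card_sinks_ne_add_one hbip hbT a]
  obtain ⟨F, hF, hFc⟩ := exists_fiber_card_eq_of_hall
    (fun w : {w // IsSink tl hd w ∧ w ≠ hd a} => ({a' | hd a' = w} : Finset A)) tl c
    (univ.filter (IsSource tl hd)) (fun _ a' _ => by simpa using isSource_tl hbip a')
    (card_le_sum_tl_of_sum_sub_one_le hbip hbT hcut a hcN) hcS
  refine ⟨F, fun w => (mem_filter.1 (hF w)).2, fun u hu => ?_⟩
  rw [hFc u (by simpa using hu), hc u hu]
  ring

theorem exists_bMatching_of_arc_assignment [Fintype V]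
    (hbip : ∀ v, IsSource tl hd v ∨ IsSink tl hd v)
    {b : V → ℤ} (hbT : ∀ v, IsSink tl hd v → b v = 1) (a : A)
    (F : {w // IsSink tl hd w ∧ w ≠ hd a} → A) (hF : ∀ w, hd (F w) = w)
    (hFb : ∀ u, IsSource tl hd u → (if tl a = u then 1 else 0) + (#{w | tl (F w) = u} : ℤ) = b u) :
    ∃ x : A → ℤ, (∀ a', x a' = 0 ∨ x a' = 1) ∧ x a = 1 ∧
      ∀ v : V, ∑ a' ∈ deltaV tl hd v, x a' = b v := by
  have hF_inj : Function.Injective F := fun w w' h => Subtype.ext (by rw [← hF, ← hF, h])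
  have haF : a ∉ univ.image F := by
    simp only [mem_image, mem_univ, true_and, not_exists]
    exact fun w h => w.2.2 (by rw [← hF, h])
  set M := insert a (univ.image F)
  have hdeg (D : Finset A) : ∑ a' ∈ D, (if a' ∈ M then 1 else 0 : ℤ) =
      (if a ∈ D then 1 else 0) + #{w | F w ∈ D} :=
    calc ∑ a' ∈ D, (if a' ∈ M then 1 else 0 : ℤ) = ∑ a' ∈ M, if a' ∈ D then 1 else 0 := by
          rw [sum_ite_mem, sum_ite_mem, inter_comm]
      _ = (if a ∈ D then 1 else 0) + #{w | F w ∈ D} := by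
          rw [sum_insert haF, sum_image fun w _ w' _ h => hF_inj h, sum_boole]
  refine ⟨fun a' => if a' ∈ M then 1 else 0, fun a' => by by_cases h : a' ∈ M <;> simp [h],
    if_pos (mem_insert_self _ _), fun v => ?_⟩
  rw [hdeg]
  rcases hbip v with hv | hv
  · rw [deltaV_of_isSource hv, ← hFb v hv]
    simp
  · rw [deltaV_of_isSink hv, hbT v hv]
    simp only [mem_filter, mem_univ, true_and, hF]
    by_cases hva : v = hd a
    · subst hva
      simp [fun w : {w // IsSink tl hd w ∧ w ≠ hd a} => w.2.2]
    · rw [if_neg (Ne.symm hva), card_eq_one.2 ⟨⟨v, hv, hva⟩, by ext; simp [Subtype.ext_iff]⟩]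
      simp

end Bipartite

theorem stmt7 [Fintype V] [Fintype A] [DecidableEq V] (tl hd : A → V)
    (hbip : ∀ v : V, IsSource tl hd v ∨ IsSink tl hd v)
    (b : V → ℤ)
    (hbT : ∀ v, IsSink tl hd v → b v = 1)
    (hbS : ∀ v, IsSource tl hd v → 1 ≤ b v)
    (hbal : ∑ v ∈ Finset.univ.filter (IsSource tl hd), b v =
            ∑ v ∈ Finset.univ.filter (IsSink tl hd), b v)
    (hcut : ∀ U : Finset V, U.Nonempty → U ≠ Finset.univ → deltaMinus tl hd U = ∅ →
      1 ≤ (∑ v ∈ U.filter (IsSource tl hd), b v) - (∑ v ∈ U.filter (IsSink tl hd), b v))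
    (a : A) :
    ∃ x : A → ℤ, (∀ a', x a' = 0 ∨ x a' = 1) ∧ x a = 1 ∧
      ∀ v : V, ∑ a' ∈ deltaV tl hd v, x a' = b v := by
  obtain ⟨F, hF, hFb⟩ := exists_arc_assignment hbip hbT hbS hbal hcut a
  exact exists_bMatching_of_arc_assignment hbip hbT a F hF hFb
end
end

section
/- Let P ⊆ ℝ^V be an integral base polyhedron (so P ∩ ℤ^V is an M-convex set satisfying the exchange axiom), let z, t ∈ P ∩ ℤ^V, and let U ⊆ V. Then for every integer λ strictly between z(U) and t(U), there exists w ∈ P ∩ ℤ^V with w(U) = λ. -/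
open scoped Classical

noncomputable section

/-- The integral points of a set `P ⊆ ℝ^V`. -/
def intPts {V : Type*} (P : Set (V → ℝ)) : Set (V → ℤ) :=
  {z | (fun v => (z v : ℝ)) ∈ P}

lemma helper8 {V : Type*} [Fintype V] [DecidableEq V] (P : Set (V → ℝ))
    (hex : ∀ z ∈ intPts P, ∀ t ∈ intPts P, ∀ u : V, t u < z u →
      ∃ v : V, z v < t v ∧
        (fun w => z w - (if w = u then 1 else 0) + (if w = v then 1 else 0)) ∈ intPts P)
    (U : Finset V) (lam : ℤ) :
    ∀ n : ℕ, ∀ z t : V → ℤ, z ∈ intPts P → t ∈ intPts P →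
      ∑ v ∈ U, z v < lam → lam < ∑ v ∈ U, t v →
      ∑ v, (z v - t v).natAbs ≤ n →
      ∃ w ∈ intPts P, ∑ v ∈ U, w v = lam := by
  intro n
  induction n with
  | zero =>
    intro z t hz ht h1 h2 hd
    exfalso
    have hzt : z = t := by
      funext v
      have : (z v - t v).natAbs = 0 := by
        have := Finset.sum_eq_zero_iff.mp (Nat.le_zero.mp hd) v (Finset.mem_univ v)
        exact this
      omega
    rw [hzt] at h1; omega
  | succ n ih =>
    intro z t hz ht h1 h2 hd
    -- find u ∈ U with z u < t u
    have hu : ∃ u ∈ U, z u < t u := by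
      by_contra hc
      push_neg at hc
      have : ∑ v ∈ U, t v ≤ ∑ v ∈ U, z v := Finset.sum_le_sum hc
      omega
    obtain ⟨u, huU, huzt⟩ := hu
    obtain ⟨v, hv, ht'⟩ := hex t ht z hz u huzt
    set t' : V → ℤ := fun w => t w - (if w = u then 1 else 0) + (if w = v then 1 else 0)
      with ht'def
    have hvu : v ≠ u := by
      intro h; rw [h] at hv; omega
    -- sum of t' over U
    have hsum : ∑ w ∈ U, t' w = ∑ w ∈ U, t w - 1 + (if v ∈ U then 1 else 0) := by
      simp only [ht'def, Finset.sum_add_distrib, Finset.sum_sub_distrib,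
        Finset.sum_ite_eq' U u (fun _ => (1 : ℤ)), Finset.sum_ite_eq' U v (fun _ => (1 : ℤ)),
        if_pos huU]
    -- distance decreases
    have hdist : ∑ w, (z w - t' w).natAbs < ∑ w, (z w - t w).natAbs := by
      apply Finset.sum_lt_sum
      · intro w _
        by_cases hwu : w = u
        · subst hwu
          simp only [ht'def, if_pos rfl, if_true, if_neg (Ne.symm hvu)]
          omega
        · by_cases hwv : w = v
          · subst hwv
            simp only [ht'def, if_neg hvu, if_pos rfl, if_true]
            omega
          · simp only [ht'def, if_neg hwu, if_neg hwv]
            omega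
      · refine ⟨u, Finset.mem_univ u, ?_⟩
        simp only [ht'def, if_pos rfl, if_true, if_neg (Ne.symm hvu)]
        omega
    by_cases hlam : ∑ w ∈ U, t' w = lam
    · exact ⟨t', ht', hlam⟩
    · have h2' : lam < ∑ w ∈ U, t' w := by
        rw [hsum]
        by_cases hvU : v ∈ U
        · rw [if_pos hvU]; omega
        · rw [if_neg hvU]
          rw [hsum, if_neg hvU] at hlam
          omega
      exact ih z t' hz ht' h1 h2' (Nat.lt_succ_iff.mp (lt_of_lt_of_le hdist hd))

theorem stmt8 {V : Type*} [Fintype V] [DecidableEq V] (P : Set (V → ℝ))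
    (hne : (intPts P).Nonempty)
    -- exchange axiom: `intPts P` is an M-convex set
    (hex : ∀ z ∈ intPts P, ∀ t ∈ intPts P, ∀ u : V, t u < z u →
      ∃ v : V, z v < t v ∧
        (fun w => z w - (if w = u then 1 else 0) + (if w = v then 1 else 0)) ∈ intPts P)
    (z t : V → ℤ) (hz : z ∈ intPts P) (ht : t ∈ intPts P) (U : Finset V) (lam : ℤ)
    (hbetween : (∑ v ∈ U, z v < lam ∧ lam < ∑ v ∈ U, t v) ∨
                (∑ v ∈ U, t v < lam ∧ lam < ∑ v ∈ U, z v)) :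
    ∃ w ∈ intPts P, ∑ v ∈ U, w v = lam := by
  rcases hbetween with ⟨h1, h2⟩ | ⟨h1, h2⟩
  · exact helper8 P hex U lam (∑ v, (z v - t v).natAbs) z t hz ht h1 h2 le_rfl
  · exact helper8 P hex U lam (∑ v, (t v - z v).natAbs) t z ht hz h1 h2 le_rfl
end
end

section
/- Let V be a finite set, let A₁, A₂ ⊆ A with A₁ ∪ A₂ = A and A₁ ∩ A₂ = C, and let B₁ = {x¹,…,x^{d₁}} ⊆ {0,1}^{A₁}, B₂ = {y¹,…,y^{d₂}} ⊆ {0,1}^{A₂} be linearly independent sets such that for each a ∈ C, the sets I_a = {i : x^i_a = 1} and J_a = {j : y^j_a = 1} are nonempty, and every vector in B₁ and B₂ has exactly one 1-entry in C. For each a ∈ C with I_a = {i₁,…,i_k}, J_a = {j₁,…,j_ℓ}, form the vectors z^a_t = x^{i₁} ⊙ y^{j_t} (t = 1,…,ℓ) and z^a_{ℓ+t} = x^{i_{1+t}} ⊙ y^{j₁} (t = 1,…,k−1), where u ⊙ w ∈ ℝ^A agrees with u on A₁ \ A₂, with w on A₂ \ A₁, and with their common value on C. Then the resulting set B₁ ⊙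 B₂ has exactly d₁ + d₂ − |C| elements and is linearly independent. -/
/-!
For a triple `(a, i, j)` of the composed family, `x i` and `y j` both restrict to the indicator
of `a` on `C = A₁ ∩ A₂`, so `x i ⊙ y j` agrees with `x i` on `A₁` and with `y j` on `A₂`.
A vanishing combination `∑ g p • (x i ⊙ y j)` therefore gives vanishing combinations of the
`x i` and of the `y j`; by independence, `g` sums to zero over each fibre of `p ↦ i` and of
`p ↦ j`, and evaluating at `a ∈ C` it sums to zero over each fibre of `p ↦ a`. A triple with
`i ≠ i₀ a` is alone in its `i`-fibre, one with `j ≠ j₀ a` alone in its `j`-fibre, and once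
those are known to vanish, `(a, i₀ a, j₀ a)` is alone in its `a`-fibre.

For the count, the triples with `i = i₀ a` correspond to the `j`'s, those with `j = j₀ a` to
the `i`'s, and those with both to the points of `C`.
-/

open scoped Classical

noncomputable section

/-- `glue A₁ u w` agrees with `u` on `A₁` and with `w` off `A₁` (the operation `u ⊙ w`). -/
def glue {A : Type*} [DecidableEq A] (A₁ : Finset A) (u w : A → ℝ) : A → ℝ :=
  fun b => if b ∈ A₁ then u b else w b

open Finset

section ZeroOneVectors

variable {α : Type*} [DecidableEq α] {s : Finset α} {f : α → ℝ}

lemma exists_eqOn_single_of_sum_eq_one (h01 : ∀ a ∈ s, f a = 0 ∨ f a = 1)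
    (hsum : ∑ a ∈ s, f a = 1) : ∃ a ∈ s, Set.EqOn f (Pi.single a 1) s := by
  obtain ⟨a, ha, hfa⟩ := exists_ne_zero_of_sum_ne_zero (hsum ▸ one_ne_zero : ∑ a ∈ s, f a ≠ 0)
  replace hfa : f a = 1 := (h01 a ha).resolve_left hfa
  refine ⟨a, ha, fun b hb => ?_⟩
  rcases eq_or_ne b a with rfl | hba
  · simp [hfa]
  have hrest : ∑ c ∈ s.erase a, f c = 0 := by linarith [add_sum_erase s f ha]
  have hnonneg : ∀ c ∈ s.erase a, 0 ≤ f c := fun c hc => by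
    rcases h01 c (mem_of_mem_erase hc) with h | h <;> norm_num [h]
  rw [Pi.single_eq_of_ne hba]
  exact (sum_eq_zero_iff_of_nonneg hnonneg).1 hrest b (mem_erase.2 ⟨hba, hb⟩)

lemma eq_of_eqOn_single {a b : α} (h : Set.EqOn f (Pi.single a 1) s) (hb : b ∈ s)
    (hfb : f b = 1) : b = a := by
  by_contra hba
  rw [h hb, Pi.single_eq_of_ne hba] at hfb
  exact zero_ne_one hfb

end ZeroOneVectors

section Glue

variable {A : Type*} [DecidableEq A] {A₁ A₂ : Finset A} {u w : A → ℝ} {b : A}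

lemma glue_apply_of_mem (hb : b ∈ A₁) : glue A₁ u w b = u b := if_pos hb

lemma glue_apply_of_mem_right (huw : ∀ c ∈ A₁ ∩ A₂, u c = w c) (hb : b ∈ A₂) :
    glue A₁ u w b = w b := by
  by_cases hb₁ : b ∈ A₁
  · exact (if_pos hb₁).trans (huw b (mem_inter.2 ⟨hb₁, hb⟩))
  · exact if_neg hb₁

end Glue

lemma sum_smul_eq_zero_of_eqOn {ι A R : Type*} [Semiring R] {s : Finset ι} {T : Set A}
    {g : ι → R} {v w : ι → A → R} (hv : ∑ p ∈ s, g p • v p = 0)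
    (hvw : ∀ p ∈ s, Set.EqOn (w p) (v p) T) (hw : ∀ p ∈ s, ∀ b ∉ T, w p b = 0) :
    ∑ p ∈ s, g p • w p = 0 := by
  funext b
  have hvb := congrFun hv b
  simp only [Finset.sum_apply, Pi.smul_apply, smul_eq_mul, Pi.zero_apply] at hvb ⊢
  by_cases hb : b ∈ T
  · rwa [sum_congr rfl fun p hp => by rw [hvw p hp hb]]
  · exact sum_eq_zero fun p hp => by rw [hw p hp b hb, mul_zero]

lemma LinearIndependent.sum_fiber_eq_zero {ι κ R M : Type*} [Ring R] [AddCommGroup M]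
    [Module R M] [Fintype ι] [DecidableEq ι] {v : ι → M} (hv : LinearIndependent R v)
    {s : Finset κ} {f : κ → ι} {g : κ → R} (h : ∑ p ∈ s, g p • v (f p) = 0) (i : ι) :
    ∑ p ∈ s with f p = i, g p = 0 := by
  refine Fintype.linearIndependent_iff.1 hv (fun i => ∑ p ∈ s with f p = i, g p) ?_ i
  rw [← h, ← sum_fiberwise s f]
  refine sum_congr rfl fun i _ => ?_
  rw [sum_smul]
  exact sum_congr rfl fun p hp => by rw [(mem_filter.1 hp).2]

lemma eq_zero_of_sum_filter_eq_zero {α β M : Type*} [AddCommMonoid M] [DecidableEq β]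
    {s : Finset α} {π : α → β} {g : α → M} {p : α} (hp : p ∈ s)
    (hsum : ∑ q ∈ s with π q = π p, g q = 0) (hother : ∀ q ∈ s, π q = π p → q ≠ p → g q = 0) :
    g p = 0 := by
  rwa [← sum_eq_single_of_mem (s := {q ∈ s | π q = π p}) p (mem_filter.2 ⟨hp, rfl⟩)
    fun q hq hqp => hother q (mem_filter.1 hq).1 (mem_filter.1 hq).2 hqp]

theorem eq_zero_of_fiber_sums_eq_zero {A ι κ M : Type*} [DecidableEq A] [DecidableEq ι]
    [DecidableEq κ] [AddCommMonoid M] {S : Finset (A × ι × κ)} {i₀ : A → ι} {j₀ : A → κ}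
    (hS : ∀ p ∈ S, p.2.1 = i₀ p.1 ∨ p.2.2 = j₀ p.1)
    (hS₁ : ∀ p ∈ S, ∀ q ∈ S, p.2.1 = q.2.1 → p.1 = q.1)
    (hS₂ : ∀ p ∈ S, ∀ q ∈ S, p.2.2 = q.2.2 → p.1 = q.1) {g : A × ι × κ → M}
    (hg₁ : ∀ i, ∑ q ∈ S with q.2.1 = i, g q = 0) (hg₂ : ∀ j, ∑ q ∈ S with q.2.2 = j, g q = 0)
    (hg₀ : ∀ p ∈ S, ∑ q ∈ S with q.1 = p.1, g q = 0) {p : A × ι × κ} (hp : p ∈ S) :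
    g p = 0 := by
  have h₁ : ∀ p ∈ S, p.2.1 ≠ i₀ p.1 → g p = 0 := by
    intro p hp hpi
    refine eq_zero_of_sum_filter_eq_zero hp (hg₁ _) fun q hq hqi hqp => (hqp ?_).elim
    have ha : q.1 = p.1 := hS₁ q hq p hp hqi
    have hqj : q.2.2 = j₀ q.1 := (hS q hq).resolve_left (by rwa [hqi, ha])
    exact Prod.ext ha (Prod.ext hqi (by rw [hqj, ha, (hS p hp).resolve_left hpi]))
  have h₂ : ∀ p ∈ S, p.2.2 ≠ j₀ p.1 → g p = 0 := by
    intro p hp hpj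
    refine eq_zero_of_sum_filter_eq_zero hp (hg₂ _) fun q hq hqj hqp => (hqp ?_).elim
    have ha : q.1 = p.1 := hS₂ q hq p hp hqj
    have hqi : q.2.1 = i₀ q.1 := (hS q hq).resolve_right (by rwa [hqj, ha])
    exact Prod.ext ha (Prod.ext (by rw [hqi, ha, (hS p hp).resolve_right hpj]) hqj)
  by_contra hgp
  have hpi : p.2.1 = i₀ p.1 := by_contra fun h => hgp (h₁ p hp h)
  have hpj : p.2.2 = j₀ p.1 := by_contra fun h => hgp (h₂ p hp h)
  refine hgp (eq_zero_of_sum_filter_eq_zero hp (hg₀ p hp) fun q hq ha hqp => ?_)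
  by_contra hgq
  have hqi : q.2.1 = i₀ q.1 := by_contra fun h => hgq (h₁ q hq h)
  have hqj : q.2.2 = j₀ q.1 := by_contra fun h => hgq (h₂ q hq h)
  exact hqp (Prod.ext ha (Prod.ext (by rw [hqi, ha, hpi]) (by rw [hqj, ha, hpj])))

section Composition

variable {A ι κ : Type*} [Fintype A] [DecidableEq A] [Fintype ι] [DecidableEq ι] [Fintype κ]
  [DecidableEq κ] {C : Finset A} {x : ι → A → ℝ} {y : κ → A → ℝ} {i₀ : A → ι} {j₀ : A → κ}
  {p q : A × ι × κ}

/-- `(a, i, j)` indexes `z^a_t = x i ⊙ y j`: the triples with `i = i₀ a` are the `z^a_t` with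
`t ≤ ℓ`, those with `j = j₀ a` are `z^a_1` and the `z^a_t` with `t > ℓ`. -/
def composedIndex (C : Finset A) (x : ι → A → ℝ) (y : κ → A → ℝ) (i₀ : A → ι) (j₀ : A → κ) :
    Finset (A × ι × κ) :=
  univ.filter fun p => p.1 ∈ C ∧ x p.2.1 p.1 = 1 ∧ y p.2.2 p.1 = 1 ∧
    (p.2.1 = i₀ p.1 ∨ p.2.2 = j₀ p.1)

lemma mem_composedIndex : p ∈ composedIndex C x y i₀ j₀ ↔
    p.1 ∈ C ∧ x p.2.1 p.1 = 1 ∧ y p.2.2 p.1 = 1 ∧ (p.2.1 = i₀ p.1 ∨ p.2.2 = j₀ p.1) := by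
  simp [composedIndex]

lemma eqOn_single_left_of_mem_composedIndex (hx : ∀ i, ∃ a ∈ C, Set.EqOn (x i) (Pi.single a 1) C)
    (hp : p ∈ composedIndex C x y i₀ j₀) : Set.EqOn (x p.2.1) (Pi.single p.1 1) C := by
  obtain ⟨ha, hxa, -⟩ := mem_composedIndex.1 hp
  obtain ⟨c, -, hc⟩ := hx p.2.1
  rwa [eq_of_eqOn_single hc ha hxa]

lemma eqOn_single_right_of_mem_composedIndex
    (hy : ∀ j, ∃ a ∈ C, Set.EqOn (y j) (Pi.single a 1) C)
    (hp : p ∈ composedIndex C x y i₀ j₀) : Set.EqOn (y p.2.2) (Pi.single p.1 1) C := by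
  obtain ⟨ha, -, hya, -⟩ := mem_composedIndex.1 hp
  obtain ⟨c, -, hc⟩ := hy p.2.2
  rwa [eq_of_eqOn_single hc ha hya]

lemma fst_eq_of_mem_composedIndex_left (hx : ∀ i, ∃ a ∈ C, Set.EqOn (x i) (Pi.single a 1) C)
    (hp : p ∈ composedIndex C x y i₀ j₀) (hq : q ∈ composedIndex C x y i₀ j₀)
    (h : p.2.1 = q.2.1) : p.1 = q.1 := by
  obtain ⟨ha, hxa, -⟩ := mem_composedIndex.1 hp
  exact eq_of_eqOn_single (eqOn_single_left_of_mem_composedIndex hx hq) ha (h ▸ hxa)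

lemma fst_eq_of_mem_composedIndex_right (hy : ∀ j, ∃ a ∈ C, Set.EqOn (y j) (Pi.single a 1) C)
    (hp : p ∈ composedIndex C x y i₀ j₀) (hq : q ∈ composedIndex C x y i₀ j₀)
    (h : p.2.2 = q.2.2) : p.1 = q.1 := by
  obtain ⟨ha, -, hya, -⟩ := mem_composedIndex.1 hp
  exact eq_of_eqOn_single (eqOn_single_right_of_mem_composedIndex hy hq) ha (h ▸ hya)

lemma card_filter_eq_i₀_composedIndex (hy : ∀ j, ∃ a ∈ C, Set.EqOn (y j) (Pi.single a 1) C)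
    (hi₀ : ∀ a ∈ C, x (i₀ a) a = 1) :
    #{p ∈ composedIndex C x y i₀ j₀ | p.2.1 = i₀ p.1} = Fintype.card κ := by
  refine card_bij (fun p _ => p.2.2) (fun _ _ => mem_univ _) (fun p hp q hq hpq => ?_)
    fun j _ => ?_
  · obtain ⟨hpS, hpi⟩ := mem_filter.1 hp
    obtain ⟨hqS, hqi⟩ := mem_filter.1 hq
    have ha := fst_eq_of_mem_composedIndex_right hy hpS hqS hpq
    exact Prod.ext ha (Prod.ext (by rw [hpi, hqi, ha]) hpq)
  · obtain ⟨a, ha, hya⟩ := hy j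
    have hj : y j a = 1 := by simpa using hya ha
    exact ⟨(a, i₀ a, j), mem_filter.2 ⟨mem_composedIndex.2 ⟨ha, hi₀ a ha, hj, .inl rfl⟩, rfl⟩, rfl⟩

lemma card_filter_eq_j₀_composedIndex (hx : ∀ i, ∃ a ∈ C, Set.EqOn (x i) (Pi.single a 1) C)
    (hj₀ : ∀ a ∈ C, y (j₀ a) a = 1) :
    #{p ∈ composedIndex C x y i₀ j₀ | p.2.2 = j₀ p.1} = Fintype.card ι := by
  refine card_bij (fun p _ => p.2.1) (fun _ _ => mem_univ _) (fun p hp q hq hpq => ?_)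
    fun i _ => ?_
  · obtain ⟨hpS, hpj⟩ := mem_filter.1 hp
    obtain ⟨hqS, hqj⟩ := mem_filter.1 hq
    have ha := fst_eq_of_mem_composedIndex_left hx hpS hqS hpq
    exact Prod.ext ha (Prod.ext hpq (by rw [hpj, hqj, ha]))
  · obtain ⟨a, ha, hxa⟩ := hx i
    have hi : x i a = 1 := by simpa using hxa ha
    exact ⟨(a, i, j₀ a), mem_filter.2 ⟨mem_composedIndex.2 ⟨ha, hi, hj₀ a ha, .inr rfl⟩, rfl⟩, rfl⟩

lemma card_filter_eq_i₀_and_eq_j₀_composedIndex (hi₀ : ∀ a ∈ C, x (i₀ a) a = 1)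
    (hj₀ : ∀ a ∈ C, y (j₀ a) a = 1) :
    #{p ∈ composedIndex C x y i₀ j₀ | p.2.1 = i₀ p.1 ∧ p.2.2 = j₀ p.1} = #C := by
  refine card_bij (fun p _ => p.1) (fun p hp => ?_) (fun p hp q hq hpq => ?_) fun a ha => ?_
  · exact (mem_composedIndex.1 (mem_filter.1 hp).1).1
  · obtain ⟨-, hpi, hpj⟩ := mem_filter.1 hp
    obtain ⟨-, hqi, hqj⟩ := mem_filter.1 hq
    exact Prod.ext hpq (Prod.ext (by rw [hpi, hqi, hpq]) (by rw [hpj, hqj, hpq]))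
  · have hS : (a, i₀ a, j₀ a) ∈ composedIndex C x y i₀ j₀ :=
      mem_composedIndex.2 ⟨ha, hi₀ a ha, hj₀ a ha, .inl rfl⟩
    exact ⟨(a, i₀ a, j₀ a), mem_filter.2 ⟨hS, rfl, rfl⟩, rfl⟩

theorem card_composedIndex_add_card (hx : ∀ i, ∃ a ∈ C, Set.EqOn (x i) (Pi.single a 1) C)
    (hy : ∀ j, ∃ a ∈ C, Set.EqOn (y j) (Pi.single a 1) C)
    (hi₀ : ∀ a ∈ C, x (i₀ a) a = 1) (hj₀ : ∀ a ∈ C, y (j₀ a) a = 1) :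
    #(composedIndex C x y i₀ j₀) + #C = Fintype.card ι + Fintype.card κ := by
  set S := composedIndex C x y i₀ j₀
  have hunion : S = {p ∈ S | p.2.1 = i₀ p.1} ∪ {p ∈ S | p.2.2 = j₀ p.1} := by
    rw [← filter_or, filter_true_of_mem fun p hp => (mem_composedIndex.1 hp).2.2.2]
  have hcard := card_union_add_card_inter {p ∈ S | p.2.1 = i₀ p.1} {p ∈ S | p.2.2 = j₀ p.1}
  rw [← hunion, ← filter_and, card_filter_eq_i₀_composedIndex hy hi₀,
    card_filter_eq_j₀_composedIndex hx hj₀, card_filter_eq_i₀_and_eq_j₀_composedIndex hi₀ hj₀]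
    at hcard
  omega

theorem linearIndependent_glue {A₁ A₂ : Finset A}
    (hx : ∀ i, ∃ a ∈ A₁ ∩ A₂, Set.EqOn (x i) (Pi.single a 1) ↑(A₁ ∩ A₂))
    (hy : ∀ j, ∃ a ∈ A₁ ∩ A₂, Set.EqOn (y j) (Pi.single a 1) ↑(A₁ ∩ A₂))
    (hxsupp : ∀ i a, a ∉ A₁ → x i a = 0) (hysupp : ∀ j a, a ∉ A₂ → y j a = 0)
    (hxli : LinearIndependent ℝ x) (hyli : LinearIndependent ℝ y) :
    LinearIndependent ℝ
      (fun p : composedIndex (A₁ ∩ A₂) x y i₀ j₀ => glue A₁ (x p.1.2.1) (y p.1.2.2)) := by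
  set S := composedIndex (A₁ ∩ A₂) x y i₀ j₀
  refine (linearIndepOn_finset_iff (s := S)
    (v := fun p : A × ι × κ => glue A₁ (x p.2.1) (y p.2.2))).2 fun g hg p hp => ?_
  have hX : ∑ p ∈ S, g p • x p.2.1 = 0 :=
    sum_smul_eq_zero_of_eqOn hg (fun _ _ _ hb => (glue_apply_of_mem hb).symm)
      fun _ _ b hb => hxsupp _ b hb
  have hY : ∑ p ∈ S, g p • y p.2.2 = 0 := by
    refine sum_smul_eq_zero_of_eqOn hg (fun p hp b hb => (glue_apply_of_mem_right ?_ hb).symm)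
      fun _ _ b hb => hysupp _ b hb
    exact fun c hc => (eqOn_single_left_of_mem_composedIndex hx hp hc).trans
      (eqOn_single_right_of_mem_composedIndex hy hp hc).symm
  refine eq_zero_of_fiber_sums_eq_zero (fun q hq => (mem_composedIndex.1 hq).2.2.2)
    (fun _ hp _ hq => fst_eq_of_mem_composedIndex_left hx hp hq)
    (fun _ hp _ hq => fst_eq_of_mem_composedIndex_right hy hp hq)
    (hxli.sum_fiber_eq_zero hX) (hyli.sum_fiber_eq_zero hY) (fun q hq => ?_) hp
  -- the `q.1`-fibre sum of `g` is the value of `∑ g p • x p.2.1` at `q.1`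
  have hXq := congrFun hX q.1
  simp only [Finset.sum_apply, Pi.smul_apply, smul_eq_mul, Pi.zero_apply] at hXq
  rw [sum_filter]
  refine (sum_congr rfl fun r hr => ?_).trans hXq
  rw [eqOn_single_left_of_mem_composedIndex hx hr (mem_composedIndex.1 hq).1, Pi.single_apply,
    mul_ite, mul_one, mul_zero]
  exact if_congr eq_comm rfl rfl

end Composition

theorem stmt12_general {A : Type*} [Fintype A] [DecidableEq A]
    (A₁ A₂ : Finset A)
    (d₁ d₂ : ℕ) (x : Fin d₁ → A → ℝ) (y : Fin d₂ → A → ℝ)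
    (hx01 : ∀ i a, x i a = 0 ∨ x i a = 1) (hy01 : ∀ j a, y j a = 0 ∨ y j a = 1)
    (hxsupp : ∀ i a, a ∉ A₁ → x i a = 0) (hysupp : ∀ j a, a ∉ A₂ → y j a = 0)
    (hxli : LinearIndependent ℝ x) (hyli : LinearIndependent ℝ y)
    -- each vector has exactly one 1-entry in `C = A₁ ∩ A₂`
    (hxone : ∀ i, ∑ a ∈ A₁ ∩ A₂, x i a = 1) (hyone : ∀ j, ∑ a ∈ A₁ ∩ A₂, y j a = 1)
    -- distinguished elements `i₁ ∈ I_a`, `j₁ ∈ J_a` for each `a ∈ C`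
    (i₀ : A → Fin d₁) (j₀ : A → Fin d₂)
    (hi₀ : ∀ a ∈ A₁ ∩ A₂, x (i₀ a) a = 1) (hj₀ : ∀ a ∈ A₁ ∩ A₂, y (j₀ a) a = 1) :
    -- the composed family `B₁ ⊙ B₂`
    let S : Finset (A × Fin d₁ × Fin d₂) :=
      Finset.univ.filter (fun p => p.1 ∈ A₁ ∩ A₂ ∧ x p.2.1 p.1 = 1 ∧ y p.2.2 p.1 = 1 ∧
        (p.2.1 = i₀ p.1 ∨ p.2.2 = j₀ p.1))
    S.card = d₁ + d₂ - (A₁ ∩ A₂).card ∧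
    LinearIndependent ℝ (fun p : {p // p ∈ S} => glue A₁ (x p.1.2.1) (y p.1.2.2)) := by
  intro S
  have hx (i) := exists_eqOn_single_of_sum_eq_one (fun a _ => hx01 i a) (hxone i)
  have hy (j) := exists_eqOn_single_of_sum_eq_one (fun a _ => hy01 j a) (hyone j)
  have hcard := card_composedIndex_add_card hx hy hi₀ hj₀
  rw [Fintype.card_fin, Fintype.card_fin] at hcard
  exact ⟨Nat.eq_sub_of_add_eq hcard, linearIndependent_glue hx hy hxsupp hysupp hxli hyli⟩

theorem stmt12 {A : Type*} [Fintype A] [DecidableEq A]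
    (A₁ A₂ : Finset A) (hcover : A₁ ∪ A₂ = Finset.univ)
    (d₁ d₂ : ℕ) (x : Fin d₁ → A → ℝ) (y : Fin d₂ → A → ℝ)
    (hx01 : ∀ i a, x i a = 0 ∨ x i a = 1) (hy01 : ∀ j a, y j a = 0 ∨ y j a = 1)
    (hxsupp : ∀ i a, a ∉ A₁ → x i a = 0) (hysupp : ∀ j a, a ∉ A₂ → y j a = 0)
    (hxli : LinearIndependent ℝ x) (hyli : LinearIndependent ℝ y)
    -- each vector has exactly one 1-entry in `C = A₁ ∩ A₂`
    (hxone : ∀ i, ∑ a ∈ A₁ ∩ A₂, x i a = 1) (hyone : ∀ j, ∑ a ∈ A₁ ∩ A₂, y j a = 1)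
    -- distinguished elements `i₁ ∈ I_a`, `j₁ ∈ J_a` for each `a ∈ C`
    (i₀ : A → Fin d₁) (j₀ : A → Fin d₂)
    (hi₀ : ∀ a ∈ A₁ ∩ A₂, x (i₀ a) a = 1) (hj₀ : ∀ a ∈ A₁ ∩ A₂, y (j₀ a) a = 1) :
    -- the composed family `B₁ ⊙ B₂`
    let S : Finset (A × Fin d₁ × Fin d₂) :=
      Finset.univ.filter (fun p => p.1 ∈ A₁ ∩ A₂ ∧ x p.2.1 p.1 = 1 ∧ y p.2.2 p.1 = 1 ∧
        (p.2.1 = i₀ p.1 ∨ p.2.2 = j₀ p.1))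
    S.card = d₁ + d₂ - (A₁ ∩ A₂).card ∧
    LinearIndependent ℝ (fun p : {p // p ∈ S} => glue A₁ (x p.1.2.1) (y p.1.2.2)) :=
  stmt12_general A₁ A₂ d₁ d₂ x y hx01 hy01 hxsupp hysupp hxli hyli hxone hyone i₀ j₀ hi₀ hj₀
end
end

section
/- In the setting of the previous composition: if x is an integer linear combination of B₁ and y is an integer linear combination of B₂ with x_a = y_a for all a ∈ C, then x ⊙ y is an integer linear combination of the vectors in B₁ ⊙ B₂. -/
open scoped Classical

noncomputable section

theorem stmt13 {A : Type*} [Fintype A] [DecidableEq A]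
    (A₁ A₂ : Finset A) (hcover : A₁ ∪ A₂ = Finset.univ)
    (d₁ d₂ : ℕ) (x : Fin d₁ → A → ℝ) (y : Fin d₂ → A → ℝ)
    (hx01 : ∀ i a, x i a = 0 ∨ x i a = 1) (hy01 : ∀ j a, y j a = 0 ∨ y j a = 1)
    (hxsupp : ∀ i a, a ∉ A₁ → x i a = 0) (hysupp : ∀ j a, a ∉ A₂ → y j a = 0)
    (hxli : LinearIndependent ℝ x) (hyli : LinearIndependent ℝ y)
    (hxone : ∀ i, ∑ a ∈ A₁ ∩ A₂, x i a = 1) (hyone : ∀ j, ∑ a ∈ A₁ ∩ A₂, y j a = 1)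
    (i₀ : A → Fin d₁) (j₀ : A → Fin d₂)
    (hi₀ : ∀ a ∈ A₁ ∩ A₂, x (i₀ a) a = 1) (hj₀ : ∀ a ∈ A₁ ∩ A₂, y (j₀ a) a = 1)
    -- integer linear combinations of `B₁` and `B₂` agreeing on `C`
    (α : Fin d₁ → ℤ) (β : Fin d₂ → ℤ)
    (hagree : ∀ a ∈ A₁ ∩ A₂, ∑ i, (α i : ℝ) * x i a = ∑ j, (β j : ℝ) * y j a) :
    let S : Finset (A × Fin d₁ × Fin d₂) :=
      Finset.univ.filter (fun p => p.1 ∈ A₁ ∩ A₂ ∧ x p.2.1 p.1 = 1 ∧ y p.2.2 p.1 = 1 ∧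
        (p.2.1 = i₀ p.1 ∨ p.2.2 = j₀ p.1))
    ∃ γ : A × Fin d₁ × Fin d₂ → ℤ,
      glue A₁ (fun b => ∑ i, (α i : ℝ) * x i b) (fun b => ∑ j, (β j : ℝ) * y j b) =
        ∑ p ∈ S, (γ p : ℝ) • glue A₁ (x p.2.1) (y p.2.2) := by
  intro S
  -- the integer `s a = ∑_{j : y j a = 1} β j`
  set s : A → ℤ := fun a => ∑ j ∈ Finset.univ.filter (fun j => y j a = 1), β j with hsdef
  have hs : ∀ a, (s a : ℝ) = ∑ j, (β j : ℝ) * y j a := by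
    intro a
    rw [hsdef]
    push_cast
    rw [Finset.sum_filter]
    refine Finset.sum_congr rfl fun j _ => ?_
    rcases hy01 j a with h | h <;> simp [h]
  -- the auxiliary coefficient on the `y`-side
  set cc : A → Fin d₂ → ℝ := fun a j => if j = j₀ a then (β j : ℝ) - (s a : ℝ) else (β j : ℝ)
    with hccdef
  refine ⟨fun p => (if p.2.2 = j₀ p.1 then α p.2.1 else 0) +
      (if p.2.1 = i₀ p.1 then (if p.2.2 = j₀ p.1 then β p.2.2 - s p.1 else β p.2.2) else 0), ?_⟩
  funext b
  simp only [Finset.sum_apply, Pi.smul_apply, smul_eq_mul]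
  set G : Fin d₁ → Fin d₂ → ℝ := fun i j => glue A₁ (x i) (y j) b with hGdef
  have main : (∑ p ∈ S, (((if p.2.2 = j₀ p.1 then α p.2.1 else 0) +
        (if p.2.1 = i₀ p.1 then (if p.2.2 = j₀ p.1 then β p.2.2 - s p.1 else β p.2.2) else 0) : ℤ)
        : ℝ) * G p.2.1 p.2.2)
      = ∑ a ∈ A₁ ∩ A₂, ((∑ i, x i a * (α i : ℝ) * G i (j₀ a)) +
          (∑ j, y j a * cc a j * G (i₀ a) j)) := by
    have hterm : ∀ (a : A) (i : Fin d₁) (j : Fin d₂),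
        (if a ∈ A₁ ∩ A₂ ∧ x i a = 1 ∧ y j a = 1 ∧ (i = i₀ a ∨ j = j₀ a) then
            (((if j = j₀ a then α i else 0) +
              (if i = i₀ a then (if j = j₀ a then β j - s a else β j) else 0) : ℤ) : ℝ) * G i j
          else 0)
        = (if a ∈ A₁ ∩ A₂ then
            (x i a * y j a * ((if j = j₀ a then (α i : ℝ) else 0) +
              (if i = i₀ a then cc a j else 0))) * G i j else 0) := by
      intro a i j
      by_cases ha : a ∈ A₁ ∩ A₂
      · rcases hx01 i a with h | h
        · simp [h, ha]
        · rcases hy01 j a with h' | h'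
          · simp [h, h', ha]
          · by_cases hi : i = i₀ a <;> by_cases hj : j = j₀ a
            · subst hi; subst hj
              simp only [hccdef, ha, h, h', if_pos, and_self, if_true, eq_self_iff_true,
                true_and, true_or, or_true]
              push_cast
              ring
            · subst hi
              simp only [hccdef, ha, h, h', if_neg hj, if_pos rfl, and_self, if_true,
                eq_self_iff_true, true_and, true_or, or_true, and_true]
              push_cast
              ring
            · subst hj
              simp only [hccdef, ha, h, h', if_neg hi, if_pos rfl, and_self, if_true,
                eq_self_iff_true, true_and, true_or, or_true, and_true, add_zero, zero_add]
              push_cast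
              ring
            · have hcond : ¬(a ∈ A₁ ∩ A₂ ∧ x i a = 1 ∧ y j a = 1 ∧ (i = i₀ a ∨ j = j₀ a)) := by
                rintro ⟨-, -, -, h3 | h3⟩ <;> [exact hi h3; exact hj h3]
              rw [if_neg hcond, if_pos ha, if_neg hj, if_neg hi]
              ring
      · simp [ha]
    have hSfilter : (∑ p ∈ S, (((if p.2.2 = j₀ p.1 then α p.2.1 else 0) +
        (if p.2.1 = i₀ p.1 then (if p.2.2 = j₀ p.1 then β p.2.2 - s p.1 else β p.2.2) else 0) : ℤ)
        : ℝ) * G p.2.1 p.2.2)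
        = ∑ a : A, ∑ i : Fin d₁, ∑ j : Fin d₂,
          (if a ∈ A₁ ∩ A₂ ∧ x i a = 1 ∧ y j a = 1 ∧ (i = i₀ a ∨ j = j₀ a) then
            (((if j = j₀ a then α i else 0) +
              (if i = i₀ a then (if j = j₀ a then β j - s a else β j) else 0) : ℤ) : ℝ) * G i j
          else 0) := by
      rw [show S = Finset.univ.filter (fun p : A × Fin d₁ × Fin d₂ =>
          p.1 ∈ A₁ ∩ A₂ ∧ x p.2.1 p.1 = 1 ∧ y p.2.2 p.1 = 1 ∧
          (p.2.1 = i₀ p.1 ∨ p.2.2 = j₀ p.1)) from rfl, Finset.sum_filter]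
      rw [Fintype.sum_prod_type]
      refine Finset.sum_congr rfl fun a _ => ?_
      rw [Fintype.sum_prod_type]
    rw [hSfilter]
    have step2 : ∀ a : A, (∑ i : Fin d₁, ∑ j : Fin d₂,
        (if a ∈ A₁ ∩ A₂ ∧ x i a = 1 ∧ y j a = 1 ∧ (i = i₀ a ∨ j = j₀ a) then
            (((if j = j₀ a then α i else 0) +
              (if i = i₀ a then (if j = j₀ a then β j - s a else β j) else 0) : ℤ) : ℝ) * G i j
          else 0))
        = (if a ∈ A₁ ∩ A₂ then (∑ i : Fin d₁, ∑ j : Fin d₂,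
            (x i a * y j a * ((if j = j₀ a then (α i : ℝ) else 0) +
              (if i = i₀ a then cc a j else 0))) * G i j) else 0) := by
      intro a
      simp only [hterm]
      by_cases ha : a ∈ A₁ ∩ A₂ <;> simp [ha]
    simp only [step2]
    rw [Finset.sum_ite_mem, Finset.univ_inter]
    refine Finset.sum_congr rfl fun a ha => ?_
    -- split the inner double sum into the two pieces
    have expand : ∀ (i : Fin d₁) (j : Fin d₂),
        (x i a * y j a * ((if j = j₀ a then (α i : ℝ) else 0) +
          (if i = i₀ a then cc a j else 0))) * G i j
        = (if j = j₀ a then (x i a * y j a * (α i : ℝ)) * G i j else 0) +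
          (if i = i₀ a then (x i a * y j a * cc a j) * G i j else 0) := by
      intro i j
      by_cases hi : i = i₀ a <;> by_cases hj : j = j₀ a <;> simp [hi, hj] <;> ring
    simp only [expand, Finset.sum_add_distrib]
    congr 1
    · refine Finset.sum_congr rfl fun i _ => ?_
      rw [Finset.sum_ite_eq' Finset.univ (j₀ a)]
      simp only [Finset.mem_univ, if_true, hj₀ a ha]
      ring
    · rw [Finset.sum_comm]
      refine Finset.sum_congr rfl fun j _ => ?_
      rw [Finset.sum_ite_eq' Finset.univ (i₀ a)]
      simp only [Finset.mem_univ, if_true, hi₀ a ha]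
      ring
  rw [main]
  by_cases hb : b ∈ A₁
  · have hGx : ∀ i j, G i j = x i b := by intro i j; simp [hGdef, glue, hb]
    have hglue : glue A₁ (fun b => ∑ i, (α i : ℝ) * x i b)
        (fun b => ∑ j, (β j : ℝ) * y j b) b = ∑ i, (α i : ℝ) * x i b := by
      simp [glue, hb]
    rw [hglue]
    simp only [hGx]
    have hzero : ∀ a ∈ A₁ ∩ A₂, (∑ j, y j a * cc a j * x (i₀ a) b) = 0 := by
      intro a ha
      have : (∑ j, y j a * cc a j) = 0 := by
        have h1 : ∀ j, y j a * cc a j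
            = (β j : ℝ) * y j a - (if j = j₀ a then (s a : ℝ) * y j a else 0) := by
          intro j
          by_cases hj : j = j₀ a
          · simp only [hccdef, if_pos hj]; ring
          · simp only [hccdef, if_neg hj]; ring
        simp only [h1]
        rw [Finset.sum_sub_distrib, Finset.sum_ite_eq' Finset.univ (j₀ a)]
        simp [hj₀ a ha, hs a]
      calc (∑ j, y j a * cc a j * x (i₀ a) b)
          = (∑ j, y j a * cc a j) * x (i₀ a) b := by rw [Finset.sum_mul]
        _ = 0 := by rw [this]; ring
    have hcollapse : ∑ a ∈ A₁ ∩ A₂, ((∑ i, x i a * (α i : ℝ) * x i b) +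
        (∑ j, y j a * cc a j * x (i₀ a) b))
        = ∑ a ∈ A₁ ∩ A₂, (∑ i, x i a * (α i : ℝ) * x i b) := by
      refine Finset.sum_congr rfl fun a ha => ?_
      rw [hzero a ha, add_zero]
    rw [hcollapse, Finset.sum_comm]
    refine Finset.sum_congr rfl fun i _ => ?_
    calc (α i : ℝ) * x i b
        = (∑ a ∈ A₁ ∩ A₂, x i a) * ((α i : ℝ) * x i b) := by rw [hxone i, one_mul]
      _ = ∑ a ∈ A₁ ∩ A₂, x i a * ((α i : ℝ) * x i b) := Finset.sum_mul _ _ _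
      _ = ∑ a ∈ A₁ ∩ A₂, x i a * (α i : ℝ) * x i b :=
          Finset.sum_congr rfl fun a _ => by ring
  · have hGy : ∀ i j, G i j = y j b := by intro i j; simp [hGdef, glue, hb]
    have hglue : glue A₁ (fun b => ∑ i, (α i : ℝ) * x i b)
        (fun b => ∑ j, (β j : ℝ) * y j b) b = ∑ j, (β j : ℝ) * y j b := by
      simp [glue, hb]
    rw [hglue]
    simp only [hGy]
    have hfirst : ∀ a ∈ A₁ ∩ A₂,
        (∑ i, x i a * (α i : ℝ) * y (j₀ a) b) = (s a : ℝ) * y (j₀ a) b := by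
      intro a ha
      calc (∑ i, x i a * (α i : ℝ) * y (j₀ a) b)
          = (∑ i, (α i : ℝ) * x i a) * y (j₀ a) b := by
            rw [Finset.sum_mul]; exact Finset.sum_congr rfl fun i _ => by ring
        _ = (s a : ℝ) * y (j₀ a) b := by rw [hagree a ha, ← hs a]
    have hsecond : ∀ a ∈ A₁ ∩ A₂,
        (∑ j, y j a * cc a j * y j b)
          = (∑ j, (β j : ℝ) * y j a * y j b) - (s a : ℝ) * y (j₀ a) b := by
      intro a ha
      have h1 : ∀ j, y j a * cc a j * y j b
          = (β j : ℝ) * y j a * y j b - (if j = j₀ a then (s a : ℝ) * y j a * y j b else 0) := by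
        intro j
        by_cases hj : j = j₀ a
        · simp only [hccdef, if_pos hj]; ring
        · simp only [hccdef, if_neg hj]; ring
      simp only [h1]
      rw [Finset.sum_sub_distrib, Finset.sum_ite_eq' Finset.univ (j₀ a)]
      simp [hj₀ a ha]
    calc (∑ j, (β j : ℝ) * y j b)
        = ∑ j, (β j : ℝ) * y j b * (∑ a ∈ A₁ ∩ A₂, y j a) := by
          refine Finset.sum_congr rfl fun j _ => ?_; rw [hyone j]; ring
      _ = ∑ j, ∑ a ∈ A₁ ∩ A₂, (β j : ℝ) * y j a * y j b := by
          refine Finset.sum_congr rfl fun j _ => ?_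
          rw [Finset.mul_sum]; exact Finset.sum_congr rfl fun a _ => by ring
      _ = ∑ a ∈ A₁ ∩ A₂, ∑ j, (β j : ℝ) * y j a * y j b := Finset.sum_comm
      _ = ∑ a ∈ A₁ ∩ A₂, ((∑ i, x i a * (α i : ℝ) * y (j₀ a) b) +
            (∑ j, y j a * cc a j * y j b)) := by
          refine Finset.sum_congr rfl fun a ha => ?_
          rw [hfirst a ha, hsecond a ha]; ring
end
end

section
/- Let V^t ∪ V^a be a partition of the vertices of a connected graph G = (V,E), with two distinct vertices w, z ∈ V^a and another vertex u ∈ V^a, u ∉ {w,z}. Let S₁, S₂ ⊆ V be disjoint with w ∈ S₁ ∩ V^a and z ∈ S₂ ∩ V^a and u ∉ S₁ ∪ S₂. If the vectors Σ_{v ∈ S₁ ∩ V^a} 1_{δ(v)}, Σ_{v ∈ S₂ ∩ V^a} 1_{δ(v)}, and 1_{δ(v)} for v ∈ V^t are linearly dependent in ℝ^E, then the vectors 1_{δ(v)}, v ∈ V \ {u}, are linearly dependent. -/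
open scoped Classical

noncomputable section

/-- The indicator vector of the edges incident to `v`, in `ℝ^E`. -/
def inc {V : Type*} (G : SimpleGraph V) (v : V) : G.edgeSet → ℝ :=
  fun e => if v ∈ (e : Sym2 V) then 1 else 0

theorem stmt17 {V : Type*} [Fintype V] [DecidableEq V] (G : SimpleGraph V)
    (hconn : G.Connected)
    (Vt Va : Finset V) (hcover : Vt ∪ Va = Finset.univ) (hdisj : Disjoint Vt Va)
    (w z u : V) (hwVa : w ∈ Va) (hzVa : z ∈ Va) (huVa : u ∈ Va)
    (hwz : w ≠ z) (huw : u ≠ w) (huz : u ≠ z)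
    (S₁ S₂ : Finset V) (hS : Disjoint S₁ S₂) (hwS : w ∈ S₁) (hzS : z ∈ S₂)
    (huS : u ∉ S₁ ∪ S₂)
    -- the three displayed families of vectors are linearly dependent
    (hdep : ¬ LinearIndependent ℝ (fun idx : Unit ⊕ Unit ⊕ {v // v ∈ Vt} =>
      match idx with
      | Sum.inl _ => ∑ v ∈ S₁ ∩ Va, inc G v
      | Sum.inr (Sum.inl _) => ∑ v ∈ S₂ ∩ Va, inc G v
      | Sum.inr (Sum.inr v) => inc G v.1)) :
    ¬ LinearIndependent ℝ (fun v : {v : V // v ≠ u} => inc G v.1) := by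
  rw [Fintype.not_linearIndependent_iff] at hdep ⊢
  obtain ⟨g, hg0, i, hgi⟩ := hdep
  -- coefficients on vertices
  set c' : V → ℝ := fun v =>
    if v ∈ S₁ ∩ Va then g (Sum.inl ())
    else if v ∈ S₂ ∩ Va then g (Sum.inr (Sum.inl ()))
    else if h : v ∈ Vt then g (Sum.inr (Sum.inr ⟨v, h⟩)) else 0 with hc'
  have hVtVa : ∀ {v}, v ∈ Vt → v ∉ Va := fun hv hva =>
    (Finset.disjoint_left.mp hdisj hv) hva
  have hc'Vt : ∀ (v) (hv : v ∈ Vt), c' v = g (Sum.inr (Sum.inr ⟨v, hv⟩)) := by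
    intro v hv
    have h1 : v ∉ S₁ ∩ Va := fun h => hVtVa hv (Finset.mem_inter.mp h).2
    have h2 : v ∉ S₂ ∩ Va := fun h => hVtVa hv (Finset.mem_inter.mp h).2
    simp only [hc']
    rw [if_neg h1, if_neg h2, dif_pos hv]
  refine ⟨fun v => c' v.1, ?_, ?_⟩
  · -- the linear combination vanishes
    have hsub : ∑ v : {v : V // v ≠ u}, c' v.1 • inc G v.1
        = ∑ v ∈ Finset.univ.filter (· ≠ u), c' v • inc G v :=
      (Finset.sum_subtype (p := fun v => v ≠ u) (Finset.univ.filter (· ≠ u))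
        (by simp) (fun v => c' v • inc G v)).symm
    show ∑ v : {v : V // v ≠ u}, c' v.1 • inc G v.1 = 0
    rw [hsub]
    set T : Finset V := ((S₁ ∩ Va) ∪ (S₂ ∩ Va)) ∪ Vt with hT
    have hTsub : T ⊆ Finset.univ.filter (· ≠ u) := by
      intro v hv
      simp only [Finset.mem_filter, Finset.mem_univ, true_and]
      rintro rfl
      rcases Finset.mem_union.mp hv with h | h
      · rcases Finset.mem_union.mp h with h | h
        · exact huS (Finset.mem_union_left _ (Finset.mem_inter.mp h).1)
        · exact huS (Finset.mem_union_right _ (Finset.mem_inter.mp h).1)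
      · exact hVtVa h huVa
    have hzero : ∀ v ∈ Finset.univ.filter (· ≠ u), v ∉ T → c' v • inc G v = 0 := by
      intro v _ hv
      have h1 : v ∉ S₁ ∩ Va := fun h =>
        hv (Finset.mem_union_left _ (Finset.mem_union_left _ h))
      have h2 : v ∉ S₂ ∩ Va := fun h =>
        hv (Finset.mem_union_left _ (Finset.mem_union_right _ h))
      have h3 : v ∉ Vt := fun h => hv (Finset.mem_union_right _ h)
      simp only [hc']
      rw [if_neg h1, if_neg h2, dif_neg h3, zero_smul]
    rw [← Finset.sum_subset hTsub hzero]
    have hd1 : Disjoint (S₁ ∩ Va) (S₂ ∩ Va) :=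
      hS.mono Finset.inter_subset_left Finset.inter_subset_left
    have hd2 : Disjoint ((S₁ ∩ Va) ∪ (S₂ ∩ Va)) Vt := by
      rw [Finset.disjoint_union_left]
      exact ⟨(hdisj.symm.mono_left Finset.inter_subset_right),
        (hdisj.symm.mono_left Finset.inter_subset_right)⟩
    rw [hT, Finset.sum_union hd2, Finset.sum_union hd1]
    have e1 : ∑ v ∈ S₁ ∩ Va, c' v • inc G v
        = g (Sum.inl ()) • ∑ v ∈ S₁ ∩ Va, inc G v := by
      rw [Finset.smul_sum]
      refine Finset.sum_congr rfl fun v hv => ?_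
      simp only [hc']
      rw [if_pos hv]
    have e2 : ∑ v ∈ S₂ ∩ Va, c' v • inc G v
        = g (Sum.inr (Sum.inl ())) • ∑ v ∈ S₂ ∩ Va, inc G v := by
      rw [Finset.smul_sum]
      refine Finset.sum_congr rfl fun v hv => ?_
      have h1 : v ∉ S₁ ∩ Va := fun h =>
        (Finset.disjoint_left.mp hd1 h) hv
      simp only [hc']
      rw [if_neg h1, if_pos hv]
    have e3 : ∑ v ∈ Vt, c' v • inc G v
        = ∑ v : {v // v ∈ Vt}, g (Sum.inr (Sum.inr v)) • inc G v.1 := by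
      rw [← Finset.sum_attach Vt (fun v => c' v • inc G v)]
      refine Finset.sum_congr rfl fun v _ => ?_
      rw [hc'Vt v.1 v.2]
    rw [e1, e2, e3, ← hg0]
    rw [Fintype.sum_sum_type, Fintype.sum_sum_type]
    simp only [Finset.univ_unique, Finset.sum_singleton]
    abel
  · -- nontriviality
    rcases i with _ | _ | ⟨v, hv⟩
    · refine ⟨⟨w, fun h => huw h.symm⟩, ?_⟩
      have hw1 : w ∈ S₁ ∩ Va := Finset.mem_inter.mpr ⟨hwS, hwVa⟩
      show c' w ≠ 0
      simp only [hc']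
      rw [if_pos hw1]
      exact hgi
    · refine ⟨⟨z, fun h => huz h.symm⟩, ?_⟩
      have hz1 : z ∉ S₁ ∩ Va := fun h =>
        (Finset.disjoint_left.mp hS (Finset.mem_inter.mp h).1) hzS
      have hz2 : z ∈ S₂ ∩ Va := Finset.mem_inter.mpr ⟨hzS, hzVa⟩
      show c' z ≠ 0
      simp only [hc']
      rw [if_neg hz1, if_pos hz2]
      exact hgi
    · refine ⟨⟨v, fun h => hVtVa (h ▸ hv) huVa⟩, ?_⟩
      show c' v ≠ 0
      rw [hc'Vt v hv]
      exact hgi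
end
end

section
/- Let F ⊆ ℝ^A, suppose there exists a subset T ⊆ A such that x(T) = 1 for all x ∈ F, and let B ∪ {b} ⊆ F be a linear basis of lin(F) where B is an integral basis for lin(B), and there is a subset C ⊆ A with x(C) = 1 for all x ∈ B and b(C) = 2. Then B ∪ {b} is an integral basis for lin(F): every integral vector f ∈ lin(F) ∩ ℤ^A is an integral linear combination of B ∪ {b}. -/
open scoped Classical

noncomputable section

/-! Write `f = λ_b b + Σ_{z ∈ B} λ_z z`. Then `f(T) = λ_b + Σ λ_z` and `f(C) = 2 λ_b + Σ λ_z`,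
so `λ_b = f(C) - f(T)` is an integer, and `f - λ_b b` is an integral vector of `lin B`. -/

open Finset Submodule

theorem sum_apply_sum_smul {A : Type*} (S : Finset A) (s : Finset (A → ℝ))
    (g : (A → ℝ) → ℝ) :
    ∑ a ∈ S, (∑ v ∈ s, g v • v) a = ∑ v ∈ s, g v * ∑ a ∈ S, v a := by
  simp only [Finset.sum_apply, Pi.smul_apply, smul_eq_mul, mul_sum]
  exact sum_comm

theorem coeff_eq_sum_sub_sum {A : Type*} [DecidableEq (A → ℝ)] {B : Finset (A → ℝ)}
    {b : A → ℝ} (hbB : b ∉ B) {T C : Finset A} (hT : ∀ x ∈ insert b B, ∑ a ∈ T, x a = 1)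
    (hC : ∀ x ∈ B, ∑ a ∈ C, x a = 1) (hbC : ∑ a ∈ C, b a = 2) (g : (A → ℝ) → ℝ) :
    g b = ∑ a ∈ C, (∑ v ∈ insert b B, g v • v) a
      - ∑ a ∈ T, (∑ v ∈ insert b B, g v • v) a := by
  have hTsum : ∑ a ∈ T, (∑ v ∈ insert b B, g v • v) a = ∑ v ∈ insert b B, g v := by
    rw [sum_apply_sum_smul]
    exact sum_congr rfl fun v hv => by rw [hT v hv, mul_one]
  have hCsum : ∑ a ∈ C, (∑ v ∈ insert b B, g v • v) a = g b + ∑ v ∈ insert b B, g v := by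
    rw [sum_apply_sum_smul, sum_insert hbB, sum_insert hbB, hbC,
      sum_congr rfl fun v hv => by rw [hC v hv, mul_one]]
    ring
  rw [hTsum, hCsum]
  ring

theorem exists_int_coeffs_insert {A : Type*} [DecidableEq (A → ℝ)] {B : Finset (A → ℝ)}
    {b : A → ℝ} (hbB : b ∉ B)
    (hBint : ∀ f : A → ℤ, (fun a => (f a : ℝ)) ∈ span ℝ (↑B : Set (A → ℝ)) →
      ∃ c : (A → ℝ) → ℤ, (fun a => (f a : ℝ)) = ∑ v ∈ B, (c v : ℝ) • v)
    {bz : A → ℤ} (hb : b = fun a => (bz a : ℝ)) (f : A → ℤ) (m : ℤ)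
    (hf : (fun a => (f a : ℝ)) - (m : ℝ) • b ∈ span ℝ (↑B : Set (A → ℝ))) :
    ∃ c : (A → ℝ) → ℤ, (fun a => (f a : ℝ)) = ∑ v ∈ insert b B, (c v : ℝ) • v := by
  obtain ⟨c, hc⟩ := hBint (f - m • bz) (by convert hf using 1; ext; simp [hb])
  refine ⟨Function.update c b m, ?_⟩
  rw [sum_insert hbB, Function.update_self, sum_congr rfl fun v hv => by
    rw [Function.update_of_ne (ne_of_mem_of_not_mem hv hbB)], ← hc]
  ext
  simp [hb]

theorem stmt19_general {A : Type*} [Fintype A]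
    (F : Set (A → ℝ)) (T : Finset A)
    (hT : ∀ x ∈ F, ∑ a ∈ T, x a = 1)
    (B : Finset (A → ℝ)) (b : A → ℝ)
    (hBF : ↑B ⊆ F) (hbF : b ∈ F) (hbB : b ∉ B)
    -- all vectors of `B ∪ {b}` are integral
    (hint : ∀ x ∈ insert b B, ∃ xz : A → ℤ, x = fun a => ((xz a : ℝ)))
    (hspan : Submodule.span ℝ (↑(insert b B) : Set (A → ℝ)) = Submodule.span ℝ F)
    -- `B` is an integral basis for `lin(B)`
    (hBint : ∀ f : A → ℤ,
      (fun a => (f a : ℝ)) ∈ Submodule.span ℝ (↑B : Set (A → ℝ)) →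
      ∃ c : (A → ℝ) → ℤ, (fun a => (f a : ℝ)) = ∑ v ∈ B, (c v : ℝ) • v)
    (C : Finset A)
    (hC : ∀ x ∈ B, ∑ a ∈ C, x a = 1) (hbC : ∑ a ∈ C, b a = 2) :
    -- then `B ∪ {b}` is an integral basis for `lin(F)`
    ∀ f : A → ℤ, (fun a => (f a : ℝ)) ∈ Submodule.span ℝ F →
      ∃ c : (A → ℝ) → ℤ, (fun a => (f a : ℝ)) = ∑ v ∈ insert b B, (c v : ℝ) • v := by
  intro f hf
  rw [← hspan] at hf
  obtain ⟨g, -, hg⟩ := mem_span_finset.mp hf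
  have hTF : ∀ x ∈ insert b B, ∑ a ∈ T, x a = 1 := fun x hx =>
    hT x (by rcases mem_insert.mp hx with rfl | hx; exacts [hbF, hBF hx])
  have hgb : g b = ((∑ a ∈ C, f a - ∑ a ∈ T, f a : ℤ) : ℝ) := by
    rw [coeff_eq_sum_sub_sum hbB hTF hC hbC g, hg]
    push_cast
    rfl
  obtain ⟨bz, hbz⟩ := hint b (mem_insert_self b B)
  refine exists_int_coeffs_insert hbB hBint hbz f (∑ a ∈ C, f a - ∑ a ∈ T, f a) ?_
  rw [← hg, sum_insert hbB, hgb, add_sub_cancel_left]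
  exact sum_smul_mem _ _ fun v hv => subset_span hv

theorem stmt19 {A : Type*} [Fintype A]
    (F : Set (A → ℝ)) (T : Finset A)
    (hT : ∀ x ∈ F, ∑ a ∈ T, x a = 1)
    (B : Finset (A → ℝ)) (b : A → ℝ)
    (hBF : ↑B ⊆ F) (hbF : b ∈ F) (hbB : b ∉ B)
    -- all vectors of `B ∪ {b}` are integral
    (hint : ∀ x ∈ insert b B, ∃ xz : A → ℤ, x = fun a => ((xz a : ℝ)))
    -- `B ∪ {b}` is a linear basis of `lin(F)`
    (hli : LinearIndependent ℝ (fun v : {v // v ∈ insert b B} => (v : A → ℝ)))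
    (hspan : Submodule.span ℝ (↑(insert b B) : Set (A → ℝ)) = Submodule.span ℝ F)
    -- `B` is an integral basis for `lin(B)`
    (hBint : ∀ f : A → ℤ,
      (fun a => (f a : ℝ)) ∈ Submodule.span ℝ (↑B : Set (A → ℝ)) →
      ∃ c : (A → ℝ) → ℤ, (fun a => (f a : ℝ)) = ∑ v ∈ B, (c v : ℝ) • v)
    (C : Finset A)
    (hC : ∀ x ∈ B, ∑ a ∈ C, x a = 1) (hbC : ∑ a ∈ C, b a = 2) :
    -- then `B ∪ {b}` is an integral basis for `lin(F)`
    ∀ f : A → ℤ, (fun a => (f a : ℝ)) ∈ Submodule.span ℝ F →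
      ∃ c : (A → ℝ) → ℤ, (fun a => (f a : ℝ)) = ∑ v ∈ insert b B, (c v : ℝ) • v :=
  stmt19_general F T hT B b hBF hbF hbB hint hspan hBint C hC hbC
end
end
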